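/- arXiv:1701.04145 — 7 statements merged into one kernel-verified Lean document; each statement's English description precedes it below -/
import Mathlib

section
/- Let A be an n×n Hermitian matrix with universal perfect state transfer and let u, v be distinct vertices in ℤ/nℤ. Suppose t₁ is the minimum element of T_{u,v} = {t > 0 : |exp(−itA)_{v,u}| = 1} (i.e., t₁ ∈ T_{u,v} and t₁ is a lower bound for T_{u,v}) and t₂ is the minimum element of T_{u,u} = {t > 0 : |exp(−itA)_{u,u}| = 1}. Then t₁ < t₂. -/
open Matrix Complex

/-- The continuous-time quantum walk `exp(-i t A)` on the weighted graph with
Hermitian adjacency matrix `A`, with vertex set `ℤ/nℤ`. -/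
noncomputable def qwalk {n : ℕ} [NeZero n] (A : Matrix (ZMod n) (ZMod n) ℂ) (t : ℝ) :
    Matrix (ZMod n) (ZMod n) ℂ :=
  NormedSpace.exp ((-(Complex.I * t)) • A)

/-- Perfect state transfer from `u` to `v` at time `t`: `|exp(-itA)_{v,u}| = 1`. -/
def pst {n : ℕ} [NeZero n] (A : Matrix (ZMod n) (ZMod n) ℂ) (u v : ZMod n) (t : ℝ) : Prop :=
  ‖qwalk A t v u‖ = 1

/-- Universal perfect state transfer: PST between every ordered pair of vertices
at some positive time. -/
def upst {n : ℕ} [NeZero n] (A : Matrix (ZMod n) (ZMod n) ℂ) : Prop :=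
  ∀ u v : ZMod n, ∃ t : ℝ, 0 < t ∧ pst A u v t

lemma qwalk_add {n : ℕ} [NeZero n] (A : Matrix (ZMod n) (ZMod n) ℂ) (s t : ℝ) :
    qwalk A (s + t) = qwalk A s * qwalk A t := by
  unfold qwalk
  have h : ((-(Complex.I * (↑(s + t) : ℂ))) • A : Matrix (ZMod n) (ZMod n) ℂ)
      = (-(Complex.I * s)) • A + (-(Complex.I * t)) • A := by
    rw [← add_smul]
    congr 1
    push_cast
    ring
  rw [h]
  exact Matrix.exp_add_of_commute _ _ (((Commute.refl A).smul_left _).smul_right _)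

lemma qwalk_zero {n : ℕ} [NeZero n] (A : Matrix (ZMod n) (ZMod n) ℂ) :
    qwalk A 0 = 1 := by
  unfold qwalk
  simp [NormedSpace.exp_zero]

lemma qwalk_conjTranspose {n : ℕ} [NeZero n] (A : Matrix (ZMod n) (ZMod n) ℂ)
    (hA : A.IsHermitian) (t : ℝ) : (qwalk A t)ᴴ = qwalk A (-t) := by
  unfold qwalk
  rw [← Matrix.exp_conjTranspose]
  congr 1
  rw [Matrix.conjTranspose_smul, hA.eq]
  congr 1
  simp

lemma qwalk_unitary {n : ℕ} [NeZero n] (A : Matrix (ZMod n) (ZMod n) ℂ)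
    (hA : A.IsHermitian) (t : ℝ) : (qwalk A t)ᴴ * qwalk A t = 1 := by
  rw [qwalk_conjTranspose A hA, ← qwalk_add, neg_add_cancel, qwalk_zero]

/-- If a column of a unitary matrix has a unit-modulus entry, all other entries
in that column vanish. -/
lemma column_zero {n : ℕ} [NeZero n] (B : Matrix (ZMod n) (ZMod n) ℂ)
    (hB : Bᴴ * B = 1) (u v : ZMod n) (hv : ‖B v u‖ = 1)
    (w : ZMod n) (hw : w ≠ v) : B w u = 0 := by
  have h1 : ∑ i, Complex.normSq (B i u) = 1 := by
    have := congrArg (fun M => M u u) hB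
    simp only [Matrix.mul_apply, Matrix.conjTranspose_apply, Matrix.one_apply_eq] at this
    have : ∑ i, (Complex.normSq (B i u) : ℂ) = 1 := by
      rw [← this]
      exact Finset.sum_congr rfl fun i _ => by
        rw [Complex.normSq_eq_conj_mul_self]; rfl
    exact_mod_cast this
  have hv2 : Complex.normSq (B v u) = 1 := by
    rw [← Complex.sq_norm, hv]; norm_num
  have hrest : ∑ i ∈ Finset.univ.erase v, Complex.normSq (B i u) = 0 := by
    have := Finset.add_sum_erase Finset.univ (fun i => Complex.normSq (B i u))
      (Finset.mem_univ v)
    rw [h1] at this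
    simp only [hv2] at this
    linarith
  have := (Finset.sum_eq_zero_iff_of_nonneg
    (fun i _ => Complex.normSq_nonneg (B i u))).mp hrest w
    (Finset.mem_erase.mpr ⟨hw, Finset.mem_univ w⟩)
  exact Complex.normSq_eq_zero.mp this

/-- If `A` is a Hermitian matrix with universal perfect state transfer, `u ≠ v`,
`t₁ = min T_{u,v}` and `t₂ = min T_{u,u}`, then `t₁ < t₂`. -/
theorem stmt_0 {n : ℕ} [NeZero n] (A : Matrix (ZMod n) (ZMod n) ℂ)
    (hA : A.IsHermitian) (hU : upst A) (u v : ZMod n) (huv : u ≠ v)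
    (t₁ t₂ : ℝ)
    (ht₁_mem : 0 < t₁ ∧ pst A u v t₁)
    (ht₁_min : ∀ t : ℝ, 0 < t → pst A u v t → t₁ ≤ t)
    (ht₂_mem : 0 < t₂ ∧ pst A u u t₂)
    (ht₂_min : ∀ t : ℝ, 0 < t → pst A u u t → t₂ ≤ t) :
    t₁ < t₂ := by
  obtain ⟨ht₁pos, ht₁⟩ := ht₁_mem
  obtain ⟨ht₂pos, ht₂⟩ := ht₂_mem
  by_contra hle
  push_neg at hle
  -- t₂ ≤ t₁
  -- column u of qwalk A t₂ is supported at u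
  have hcol : ∀ w : ZMod n, w ≠ u → qwalk A t₂ w u = 0 :=
    column_zero _ (qwalk_unitary A hA t₂) u u ht₂
  rcases eq_or_lt_of_le hle with heq | hlt
  · -- t₂ = t₁ : then qwalk A t₁ v u = 0, contradicting |·| = 1
    have : qwalk A t₁ v u = 0 := heq ▸ hcol v huv.symm
    rw [pst, this] at ht₁
    simp at ht₁
  · -- t₂ < t₁ : PST u→v at t₁ - t₂, contradicting minimality of t₁
    have hsplit : qwalk A t₁ = qwalk A (t₁ - t₂) * qwalk A t₂ := by
      rw [← qwalk_add]; ring_nf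
    have hentry : qwalk A t₁ v u = qwalk A (t₁ - t₂) v u * qwalk A t₂ u u := by
      rw [hsplit, Matrix.mul_apply]
      rw [Finset.sum_eq_single u]
      · intro w _ hw
        rw [hcol w hw, mul_zero]
      · intro h; exact absurd (Finset.mem_univ u) h
    have habs : ‖qwalk A (t₁ - t₂) v u‖ = 1 := by
      have := ht₁
      rw [pst, hentry, norm_mul, ht₂, mul_one] at this
      exact this
    have := ht₁_min (t₁ - t₂) (by linarith) habs
    linarith
end

section
/- Let A be an n×n Hermitian matrix and let t ∈ ℝ be such that |exp(−itA)_{k+1,k}| = 1 for every k ∈ ℤ/nℤ (indices mod n). Then exp(−itA) = P·D, where P is the cyclic permutation matrix with P_{k+1,k} = 1 for all k ∈ ℤ/nℤ (and all other entries zero) and D is a diagonal matrix whose diagonal entries all have modulus 1. In particular, exp(−itA) is a monomial matrix which commutes with A. -/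
open Matrix Complex

/-- The cyclic permutation matrix `P` with `P_{k+1,k} = 1` for all `k` and
all other entries zero. -/
def cycP (n : ℕ) : Matrix (ZMod n) (ZMod n) ℂ :=
  fun i j => if i = j + 1 then 1 else 0

/-- A monomial matrix: product of a permutation matrix and an invertible diagonal
matrix. -/
def IsMonomial {n : ℕ} [NeZero n] (M : Matrix (ZMod n) (ZMod n) ℂ) : Prop :=
  ∃ (σ : Equiv.Perm (ZMod n)) (d : ZMod n → ℂ),
    (∀ i, d i ≠ 0) ∧ M = (σ.permMatrix ℂ) * Matrix.diagonal d

/-- If `A` is Hermitian and at time `t` we have `|exp(-itA)_{k+1,k}| = 1` for all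
`k ∈ ℤ/nℤ`, then `exp(-itA) = P · D` for the cyclic permutation matrix `P` and a
diagonal matrix `D` whose diagonal entries are unimodular; in particular
`exp(-itA)` is a monomial matrix commuting with `A`. -/
theorem stmt_6 {n : ℕ} [NeZero n] (A : Matrix (ZMod n) (ZMod n) ℂ)
    (hA : A.IsHermitian) (t : ℝ)
    (h : ∀ k : ZMod n, ‖qwalk A t (k + 1) k‖ = 1) :
    (∃ d : ZMod n → ℂ, (∀ k, ‖d k‖ = 1) ∧
      qwalk A t = cycP n * Matrix.diagonal d) ∧
    IsMonomial (qwalk A t) ∧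
    qwalk A t * A = A * qwalk A t := by
  set U := qwalk A t with hU
  -- U is unitary
  have hstar : (((-(Complex.I * t)) • A))ᴴ = (Complex.I * t) • A := by
    rw [conjTranspose_smul, hA.eq]
    congr 1
    simp [Complex.ext_iff]
  have hunit : Uᴴ * U = 1 := by
    rw [hU, qwalk, ← Matrix.exp_conjTranspose, hstar,
      ← Matrix.exp_add_of_commute _ _ (((Commute.refl A).smul_left _).smul_right _),
      ← add_smul]
    simp
  -- the diagonal entries
  set d : ZMod n → ℂ := fun k => U (k + 1) k with hd
  have habs : ∀ k, ‖d k‖ = 1 := fun k => h k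
  have hdne : ∀ k, d k ≠ 0 := by
    intro k hk
    simpa [hk] using habs k
  -- off entries vanish
  have hzero : ∀ i j : ZMod n, i ≠ j + 1 → U i j = 0 := by
    intro i j hij
    have hcol : ∑ l, Complex.normSq (U l j) = 1 := by
      have := congrFun (congrFun hunit j) j
      rw [Matrix.mul_apply] at this
      simp only [conjTranspose_apply, Matrix.one_apply_eq] at this
      have : ((∑ l, Complex.normSq (U l j) : ℝ) : ℂ) = 1 := by
        rw [← this]
        push_cast
        refine Finset.sum_congr rfl fun l _ => ?_
        rw [RCLike.star_def, mul_comm, Complex.mul_conj]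
      exact_mod_cast this
    have h1 : Complex.normSq (U (j + 1) j) = 1 := by
      have := habs j
      rw [hd] at this
      rw [← Complex.sq_norm, this, one_pow]
    have hrest : ∑ l ∈ Finset.univ.erase (j + 1), Complex.normSq (U l j) = 0 := by
      have h2 := Finset.add_sum_erase Finset.univ (fun l => Complex.normSq (U l j))
        (Finset.mem_univ (j + 1))
      beta_reduce at h2
      linarith [hcol, h2, h1]
    have := (Finset.sum_eq_zero_iff_of_nonneg
      (fun l _ => Complex.normSq_nonneg (U l j))).mp hrest i
      (Finset.mem_erase.mpr ⟨hij, Finset.mem_univ i⟩)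
    exact Complex.normSq_eq_zero.mp this
  have hPD : U = cycP n * Matrix.diagonal d := by
    ext i j
    rw [Matrix.mul_diagonal, cycP]
    by_cases hij : i = j + 1
    · simp [hij, hd]
    · simp [hij, hzero i j hij]
  refine ⟨⟨d, habs, hPD⟩, ⟨Equiv.subRight (1 : ZMod n), d, hdne, ?_⟩, ?_⟩
  · have : Equiv.Perm.permMatrix ℂ (Equiv.subRight (1 : ZMod n)) = cycP n := by
      ext i j
      show (Equiv.subRight (1 : ZMod n)).toPEquiv.toMatrix i j = cycP n i j
      rw [PEquiv.toMatrix_toPEquiv_eq, cycP]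
      simp [Matrix.one_apply, Equiv.subRight, sub_eq_iff_eq_add]
    rw [this]; exact hPD
  · exact (((Commute.refl A).smul_left _).exp_left).eq
end

section
/- Let n = ab where a ≥ b ≥ 2 are integers, and let β ≥ 2 be an integer. For a positive integer d, define ϑ_d : {0,…,n−1} → ℤ by ϑ_d(x) = β·⌊x/d⌋·d + (x mod d). Let X be the n×n matrix with entries X_{j,k} = ζ_{βn}^{ϑ_a(j)·ϑ_b(k)}/√n, where ζ_{βn} = e^{2πi/(βn)}. Then X is a unitary matrix; since all its entries have modulus 1/√n, X is a type-II matrix. -/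
open Matrix Complex

/-- `ϑ_d(x) = β ⌊x/d⌋ d + (x mod d)`. -/
def theta (β d x : ℕ) : ℕ := β * (x / d) * d + x % d

private lemma geom_zero {x : ℂ} {k : ℕ} (hx : x ≠ 1) (hk : x ^ k = 1) :
    ∑ i : Fin k, x ^ (i : ℕ) = 0 := by
  rw [Fin.sum_univ_eq_sum_range, geom_sum_eq hx, hk]
  simp

private lemma real_pow_one {x : ℝ} {k : ℕ} (hk : k ≠ 0) (h0 : 0 ≤ x) (h : x ^ k = 1) :
    x = 1 := by
  rcases lt_trichotomy x 1 with h2 | h2 | h2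
  · have := pow_lt_one₀ h0 h2 hk
    linarith
  · exact h2
  · have := one_lt_pow₀ h2 hk
    linarith

private lemma norm_one_of_pow {x : ℂ} {k : ℕ} (hk : k ≠ 0) (h : x ^ k = 1) : ‖x‖ = 1 := by
  refine real_pow_one hk (norm_nonneg x) ?_
  rw [← norm_pow, h, norm_one]

/-- Let `n = ab` with `a ≥ b ≥ 2`, let `β ≥ 2`, and let `X` be the `n × n` matrix
with entries `X_{j,k} = ζ_{βn}^{ϑ_a(j) ϑ_b(k)} / √n`.  Then `X` is unitary, and
since all its entries have modulus `1/√n`, `X` is a type-II matrix. -/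
theorem stmt_8 (a b β n : ℕ) (hb : 2 ≤ b) (hab : b ≤ a) (hβ : 2 ≤ β)
    (hn : n = a * b)
    (ζ : ℂ) (hζ : ζ = Complex.exp (2 * Real.pi * Complex.I / (β * n)))
    (X : Matrix (Fin n) (Fin n) ℂ)
    (hX : ∀ j k : Fin n,
      X j k = ζ ^ (theta β a j.val * theta β b k.val) / Real.sqrt n) :
    X * Xᴴ = 1 ∧ ∀ j k : Fin n, ‖X j k‖ = 1 / Real.sqrt n := by
  subst hn
  have ha0 : 0 < a := by omega
  have hb0 : 0 < b := by omega
  have hβ0 : 0 < β := by omega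
  have hβn0 : β * (a * b) ≠ 0 := by positivity
  have hprim : IsPrimitiveRoot ζ (β * (a * b)) := by
    rw [hζ]
    convert Complex.isPrimitiveRoot_exp (β * (a * b)) hβn0 using 3
    push_cast
    ring
  have hpow : ζ ^ (β * (a * b)) = 1 := hprim.pow_eq_one
  have hζ0 : ζ ≠ 0 := hprim.ne_zero hβn0
  have hnorm : ‖ζ‖ = 1 := norm_one_of_pow hβn0 hpow
  have habs : ‖ζ‖ = 1 := hnorm
  have hzpow1 : ζ ^ ((β * (a * b) : ℕ) : ℤ) = 1 := by
    rw [zpow_natCast, hpow]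
  have hbig : ∀ t : ℤ, ζ ^ (((β * (a * b) : ℕ) : ℤ) * t) = 1 := by
    intro t
    rw [_root_.zpow_mul, hzpow1, _root_.one_zpow]
  -- second conjunct
  have habsX : ∀ j k : Fin (a * b),
      ‖X j k‖ = 1 / Real.sqrt ((a * b : ℕ) : ℝ) := by
    intro j k
    rw [hX j k, norm_div, norm_pow, habs, one_pow, Complex.norm_real, Real.norm_eq_abs,
      _root_.abs_of_nonneg (Real.sqrt_nonneg _)]
  refine ⟨?_, habsX⟩
  have hsqrt : ((Real.sqrt ((a * b : ℕ) : ℝ) : ℂ)) * (Real.sqrt ((a * b : ℕ) : ℝ) : ℂ)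
      = ((a * b : ℕ) : ℂ) := by
    rw [← Complex.ofReal_mul, Real.mul_self_sqrt (by positivity)]
    norm_num
  have hsum : ∀ E : ℤ, ∑ l : Fin (a * b), ζ ^ (E * (theta β b l.val : ℤ))
      = (∑ q : Fin a, (ζ ^ (E * ((β * b : ℕ) : ℤ))) ^ (q : ℕ))
        * (∑ r : Fin b, (ζ ^ E) ^ (r : ℕ)) := by
    intro E
    rw [← Equiv.sum_comp (finProdFinEquiv : Fin a × Fin b ≃ Fin (a * b)),
      Fintype.sum_prod_type, Finset.sum_mul_sum]
    refine Finset.sum_congr rfl fun q _ => Finset.sum_congr rfl fun r _ => ?_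
    have hval : ((finProdFinEquiv (q, r) : Fin (a * b)) : ℕ) = r + b * q := rfl
    have hth : theta β b ((finProdFinEquiv (q, r) : Fin (a * b)) : ℕ) = β * q * b + r := by
      rw [hval]
      unfold theta
      rw [Nat.add_mul_div_left _ _ hb0, Nat.div_eq_of_lt r.2, Nat.add_mul_mod_self_left,
        Nat.mod_eq_of_lt r.2]
      ring
    rw [hth, ← zpow_natCast (ζ ^ (E * ((β * b : ℕ) : ℤ))) (q : ℕ),
      ← zpow_natCast (ζ ^ E) (r : ℕ), ← _root_.zpow_mul, ← _root_.zpow_mul,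
      ← zpow_add₀ hζ0]
    congr 1
    push_cast
    ring
  -- main claim
  have key : ∀ j k : Fin (a * b),
      ∑ l : Fin (a * b),
        ζ ^ (((theta β a j.val : ℤ) - (theta β a k.val : ℤ)) * (theta β b l.val : ℤ))
        = if j = k then ((a * b : ℕ) : ℂ) else 0 := by
    intro j k
    by_cases hjk : j = k
    · subst hjk
      simp only [sub_self, zero_mul, zpow_zero, Finset.sum_const, Finset.card_univ,
        Fintype.card_fin, nsmul_eq_mul, mul_one, if_pos rfl]
      simp
    · rw [if_neg hjk]
      obtain ⟨E, hE⟩ : ∃ E : ℤ, E = (theta β a j.val : ℤ) - (theta β a k.val : ℤ) :=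
        ⟨_, rfl⟩
      rw [← hE, hsum E]
      -- decompositions
      have hj := Nat.div_add_mod (j : ℕ) a
      have hk := Nat.div_add_mod (k : ℕ) a
      have hjm : (j : ℕ) % a < a := Nat.mod_lt _ ha0
      have hkm : (k : ℕ) % a < a := Nat.mod_lt _ ha0
      have hjlt : (j : ℕ) / a < b :=
        (Nat.div_lt_iff_lt_mul ha0).mpr (lt_of_lt_of_eq j.2 (mul_comm a b))
      have hklt : (k : ℕ) / a < b :=
        (Nat.div_lt_iff_lt_mul ha0).mpr (lt_of_lt_of_eq k.2 (mul_comm a b))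
      have hEeq : E = (β : ℤ) * ((j : ℕ) / a : ℕ) * a + ((j : ℕ) % a : ℕ)
          - ((β : ℤ) * ((k : ℕ) / a : ℕ) * a + ((k : ℕ) % a : ℕ)) := by
        rw [hE]; unfold theta; push_cast [Int.natCast_div]; ring
      by_cases hdvd : (a : ℤ) ∣ E
      · -- second factor is zero
        obtain ⟨c, hc⟩ := hdvd
        rw [hEeq] at hc
        have hr : (((j : ℕ) % a : ℕ) : ℤ) - (((k : ℕ) % a : ℕ) : ℤ)
            = (a : ℤ) * (c - (β : ℤ) * ((j : ℕ) / a : ℕ) + (β : ℤ) * ((k : ℕ) / a : ℕ)) := by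
          linear_combination hc
        have hrabs : |(((j : ℕ) % a : ℕ) : ℤ) - (((k : ℕ) % a : ℕ) : ℤ)| < (a : ℤ) := by
          rw [abs_lt]
          omega
        have hr0 : (((j : ℕ) % a : ℕ) : ℤ) = (((k : ℕ) % a : ℕ) : ℤ) := by
          have := Int.eq_zero_of_abs_lt_dvd ⟨_, hr⟩ hrabs
          omega
        have hEform : E = ((β : ℤ) * a) * ((((j : ℕ) / a : ℕ) : ℤ) - (((k : ℕ) / a : ℕ) : ℤ)) := by
          rw [hEeq, hr0]; ring
        have hqne : ((((j : ℕ) / a : ℕ) : ℤ) - (((k : ℕ) / a : ℕ) : ℤ)) ≠ 0 := by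
          intro h
          have hqq : (j : ℕ) / a = (k : ℕ) / a := by omega
          have hmm : (j : ℕ) % a = (k : ℕ) % a := by omega
          refine hjk (Fin.ext ?_)
          conv_lhs => rw [← Nat.div_add_mod (j : ℕ) a]
          rw [hqq, hmm, Nat.div_add_mod]
        have hwb : (ζ ^ E) ^ b = 1 := by
          rw [← zpow_natCast (ζ ^ E) b, ← _root_.zpow_mul]
          have he : E * (b : ℤ) = ((β * (a * b) : ℕ) : ℤ)
              * ((((j : ℕ) / a : ℕ) : ℤ) - (((k : ℕ) / a : ℕ) : ℤ)) := by
            rw [hEform]; push_cast; ring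
          rw [he, hbig]
        have hwne : ζ ^ E ≠ 1 := by
          intro h
          rw [hprim.zpow_eq_one_iff_dvd] at h
          have hfac : ((β * (a * b) : ℕ) : ℤ) = ((β : ℤ) * a) * b := by push_cast; ring
          rw [hfac, hEform] at h
          have hba : (β : ℤ) * a ≠ 0 := by positivity
          have hdb := (mul_dvd_mul_iff_left hba).mp h
          have hd1 : (0 : ℤ) ≤ (((j : ℕ) / a : ℕ) : ℤ) := Int.natCast_nonneg _
          have hd2 : (0 : ℤ) ≤ (((k : ℕ) / a : ℕ) : ℤ) := Int.natCast_nonneg _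
          have habs2 : |(((j : ℕ) / a : ℕ) : ℤ) - (((k : ℕ) / a : ℕ) : ℤ)| < (b : ℤ) := by
            rw [abs_lt]; omega
          exact hqne (Int.eq_zero_of_abs_lt_dvd hdb habs2)
        rw [geom_zero hwne hwb, mul_zero]
      · -- first factor is zero
        have hxa : (ζ ^ (E * ((β * b : ℕ) : ℤ))) ^ a = 1 := by
          rw [← zpow_natCast _ a, ← _root_.zpow_mul]
          have he : E * ((β * b : ℕ) : ℤ) * a = ((β * (a * b) : ℕ) : ℤ) * E := by
            push_cast; ring
          rw [he, hbig]
        have hxne : ζ ^ (E * ((β * b : ℕ) : ℤ)) ≠ 1 := by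
          intro h
          rw [hprim.zpow_eq_one_iff_dvd] at h
          apply hdvd
          have hfac : ((β * (a * b) : ℕ) : ℤ) = ((β : ℤ) * b) * a := by push_cast; ring
          have h2 : E * ((β * b : ℕ) : ℤ) = ((β : ℤ) * b) * E := by push_cast; ring
          rw [hfac, h2] at h
          have hbb : (β : ℤ) * b ≠ 0 := by positivity
          exact (mul_dvd_mul_iff_left hbb).mp h
        rw [geom_zero hxne hxa, zero_mul]
  -- assemble
  ext j k
  rw [Matrix.mul_apply]
  have hterm : ∀ l : Fin (a * b), X j l * (Xᴴ) l k
      = ζ ^ (((theta β a j.val : ℤ) - (theta β a k.val : ℤ)) * (theta β b l.val : ℤ))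
        * (((a * b : ℕ) : ℂ))⁻¹ := by
    intro l
    rw [Matrix.conjTranspose_apply, hX j l, hX k l, star_div₀, star_pow, Complex.star_def,
      Complex.conj_ofReal, ← Complex.inv_eq_conj hnorm, div_mul_div_comm, hsqrt, inv_pow]
    rw [div_eq_mul_inv]
    congr 1
    rw [← zpow_natCast ζ (theta β a j.val * theta β b l.val),
      ← zpow_natCast ζ (theta β a k.val * theta β b l.val), ← _root_.zpow_neg, ← zpow_add₀ hζ0]
    congr 1
    push_cast
    ring
  rw [Finset.sum_congr rfl fun l _ => hterm l, ← Finset.sum_mul, key j k]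
  have hne : ((a * b : ℕ) : ℂ) ≠ 0 := Nat.cast_ne_zero.mpr (by positivity)
  by_cases hjk : j = k
  · subst hjk
    rw [if_pos rfl, Matrix.one_apply_eq]
    exact mul_inv_cancel₀ hne
  · rw [if_neg hjk, Matrix.one_apply_ne hjk, zero_mul]
end

section
/- Let G = Circ(a_0,…,a_{n−1}) be an n×n Hermitian circulant matrix with universal perfect state transfer. If n is a prime, the square of a prime, or a power of two, then G is dense, i.e., a_j ≠ 0 for all j = 1,…,n−1. -/
open Matrix Complex

/-- The circulant matrix `Circ(a₀,…,a_{n-1})`, with `C_{j,k} = a_{k-j}`. -/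
def Circ {n : ℕ} (a : ZMod n → ℂ) : Matrix (ZMod n) (ZMod n) ℂ :=
  fun j k => a (k - j)

open Polynomial


noncomputable def chr (n : ℕ) (x : ZMod n) : ℂ :=
  Complex.exp (2 * Real.pi * Complex.I / n) ^ x.val

section chr
variable {n : ℕ} [NeZero n]

lemma chr_root : IsPrimitiveRoot (Complex.exp (2 * Real.pi * Complex.I / n)) n :=
  Complex.isPrimitiveRoot_exp n (NeZero.ne n)

lemma chr_add (x y : ZMod n) : chr n (x + y) = chr n x * chr n y := by
  have h : orderOf (Complex.exp (2 * Real.pi * Complex.I / n)) = n :=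
    (chr_root (n := n)).eq_orderOf.symm
  unfold chr
  set w := Complex.exp (2 * Real.pi * Complex.I / n) with hw
  clear_value w
  have hp := pow_mod_orderOf w (x.val + y.val)
  rw [h] at hp
  rw [ZMod.val_add, hp, pow_add]

lemma chr_zero : chr n (0 : ZMod n) = 1 := by
  unfold chr
  rw [ZMod.val_zero, pow_zero]

lemma chr_nsmul (k : ℕ) (x : ZMod n) : chr n (k • x) = chr n x ^ k := by
  induction k with
  | zero => simpa using chr_zero
  | succ k ih => rw [succ_nsmul, chr_add, ih, pow_succ]

lemma chr_mul (m x : ZMod n) : chr n (m * x) = chr n x ^ m.val := by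
  rw [← chr_nsmul]
  congr 1
  rw [nsmul_eq_mul]
  congr 1
  exact ((ZMod.natCast_val m).trans (ZMod.cast_id _ _)).symm

lemma chr_abs (x : ZMod n) : ‖chr n x‖ = 1 := by
  unfold chr
  rw [norm_pow, Complex.norm_exp]
  have : (2 * Real.pi * Complex.I / n).re = 0 := by
    simp [Complex.div_re]
  rw [this, Real.exp_zero, one_pow]

lemma chr_ne_one {d : ZMod n} (hd : d ≠ 0) : chr n d ≠ 1 := by
  unfold chr
  apply (chr_root (n := n)).pow_ne_one_of_pos_of_lt
  · exact fun h => hd (by rwa [ZMod.val_eq_zero] at h)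
  · exact ZMod.val_lt d

lemma chr_sum_eq_zero {d : ZMod n} (hd : d ≠ 0) : ∑ x : ZMod n, chr n (d * x) = 0 := by
  have key : chr n d * ∑ x : ZMod n, chr n (d * x) = ∑ x : ZMod n, chr n (d * x) := by
    rw [Finset.mul_sum]
    refine Fintype.sum_equiv (Equiv.addRight (1 : ZMod n)) _ _ fun x => ?_
    rw [← chr_add]
    congr 1
    simp [Equiv.coe_addRight, mul_add]
    ring
  have := sub_eq_zero.mpr key
  rw [← sub_one_mul] at this
  rcases mul_eq_zero.mp this with h | h
  · exact absurd (sub_eq_zero.mp h) (chr_ne_one hd)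
  · exact h

lemma chr_neg (x : ZMod n) : chr n (-x) = (chr n x)⁻¹ := by
  have h : chr n x * chr n (-x) = 1 := by rw [← chr_add, add_neg_cancel, chr_zero]
  have hx : chr n x ≠ 0 := by
    intro h0
    rw [h0, zero_mul] at h
    exact one_ne_zero h.symm
  field_simp
  linear_combination h

lemma chr_conj (x : ZMod n) : (starRingEnd ℂ) (chr n x) = chr n (-x) := by
  rw [chr_neg]
  have habs := chr_abs (n := n) x
  rw [Complex.inv_def, ← Complex.sq_norm, habs]
  simp

end chr

lemma triangle_eq {n : ℕ} [NeZero n] (f : ZMod n → ℂ)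
    (h1 : ∀ m, ‖f m‖ = 1)
    (h2 : ‖∑ m, f m‖ = n) : ∀ m, f m = f 0 := by
  have hn : 0 < n := Nat.pos_of_ne_zero (NeZero.ne n)
  set T := ∑ m, f m with hT
  have hTabs : ‖T‖ = n := h2
  have hTne : T ≠ 0 := by
    intro h
    rw [h, norm_zero] at hTabs
    exact hn.ne' (by exact_mod_cast hTabs.symm)
  set g : ZMod n → ℝ := fun m => ((starRingEnd ℂ) T * f m).re with hg
  have hg_le : ∀ m, g m ≤ n := by
    intro m
    calc g m ≤ ‖(starRingEnd ℂ) T * f m‖ := Complex.re_le_norm _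
    _ = n := by rw [norm_mul, Complex.norm_conj, h1, hTabs, mul_one]
  have hgsum : ∑ m, g m = (n : ℝ) * n := by
    have : ∑ m, ((starRingEnd ℂ) T * f m) = (starRingEnd ℂ) T * T := by
      rw [← Finset.mul_sum]
    calc ∑ m, g m = (∑ m, (starRingEnd ℂ) T * f m).re := by
          rw [Complex.re_sum]
      _ = ((starRingEnd ℂ) T * T).re := by rw [this]
      _ = Complex.normSq T := by rw [mul_comm, Complex.mul_conj]; simp
      _ = (n : ℝ) * n := by
          rw [← Complex.sq_norm, hTabs]; ring
  have hgeq : ∀ m, g m = n := by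
    by_contra hc
    push_neg at hc
    obtain ⟨m0, hm0⟩ := hc
    have hlt : ∑ m, g m < ∑ _m : ZMod n, (n : ℝ) := by
      apply Finset.sum_lt_sum (fun i _ => hg_le i)
      exact ⟨m0, Finset.mem_univ m0, lt_of_le_of_ne (hg_le m0) hm0⟩
    rw [hgsum, Finset.sum_const, Finset.card_univ, ZMod.card] at hlt
    simp [nsmul_eq_mul] at hlt
  have key : ∀ m, (starRingEnd ℂ) T * f m = (n : ℂ) := by
    intro m
    set z := (starRingEnd ℂ) T * f m with hz
    have hre : z.re = n := hgeq m
    have habs : ‖z‖ = n := by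
      rw [hz, norm_mul, Complex.norm_conj, h1, hTabs, mul_one]
    have him : z.im = 0 := by
      have h1' : ‖z‖ ^ 2 = z.re ^ 2 + z.im ^ 2 := by
        rw [Complex.sq_norm, Complex.normSq_apply]; ring
      rw [habs, hre] at h1'
      nlinarith
    exact Complex.ext (by simpa using hre) (by simpa using him)
  intro m
  have := (key m).trans (key 0).symm
  exact mul_left_cancel₀ (by simpa [_root_.map_eq_zero] using hTne) this

lemma coeff_of_cyclo {p s : ℕ} (hp : p.Prime) {Q : Polynomial ℚ}
    (hdeg : Q.degree < ((p ^ (s + 1) : ℕ) : WithBot ℕ))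
    (hdvd : Polynomial.cyclotomic (p ^ (s + 1)) ℚ ∣ Q)
    {u w : ℕ} (hu : u < p ^ s) (hw : w < p) :
    Q.coeff (u + w * p ^ s) = Q.coeff u := by
  obtain ⟨R, hQR⟩ := hdvd
  by_cases hR : R = 0
  · rw [hQR, hR, mul_zero]
    simp
  have hΦne : (Polynomial.cyclotomic (p ^ (s + 1)) ℚ) ≠ 0 := Polynomial.cyclotomic_ne_zero _ ℚ
  have hΦdeg : (Polynomial.cyclotomic (p ^ (s + 1)) ℚ).natDegree = p ^ s * (p - 1) := by
    rw [Polynomial.natDegree_cyclotomic, Nat.totient_prime_pow hp (Nat.succ_pos s)]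
    simp
  have hQne : Q ≠ 0 := by
    rw [hQR]
    exact mul_ne_zero hΦne hR
  have hRdeg : R.natDegree < p ^ s := by
    have h1 : Q.natDegree < p ^ (s + 1) := by
      rwa [Polynomial.degree_eq_natDegree hQne, Nat.cast_lt] at hdeg
    have h2 : Q.natDegree = p ^ s * (p - 1) + R.natDegree := by
      rw [hQR, Polynomial.natDegree_mul hΦne hR, hΦdeg]
    have h3 : p ^ (s + 1) = p ^ s * (p - 1) + p ^ s := by
      have h4 : p - 1 + 1 = p := Nat.succ_pred_eq_of_pos hp.pos
      calc p ^ (s + 1) = p ^ s * p := by rw [pow_succ]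
        _ = p ^ s * (p - 1 + 1) := by rw [h4]
        _ = p ^ s * (p - 1) + p ^ s := by ring
    omega
  have hRdeg' : R.degree < ((p ^ s : ℕ) : WithBot ℕ) := by
    rwa [Polynomial.degree_eq_natDegree hR, Nat.cast_lt]
  have main : ∀ w' : ℕ, w' < p → Q.coeff (u + w' * p ^ s) = R.coeff u := by
    intro w' hw'
    rw [hQR, Polynomial.cyclotomic_prime_pow_eq_geom_sum hp, Finset.sum_mul,
      Polynomial.finset_sum_coeff]
    have hterm : ∀ i ∈ Finset.range p,
        ((X ^ p ^ s) ^ i * R).coeff (u + w' * p ^ s)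
          = if i = w' then R.coeff u else 0 := by
      intro i hi
      rw [← pow_mul, Polynomial.X_pow_mul, Polynomial.coeff_mul_X_pow']
      rcases lt_trichotomy i w' with h | h | h
      · rw [if_neg (Nat.ne_of_lt h)]
        rw [if_pos (by nlinarith)]
        apply Polynomial.coeff_eq_zero_of_degree_lt
        apply lt_of_lt_of_le hRdeg'
        rw [Nat.cast_le]
        have : p ^ s * i + p ^ s ≤ w' * p ^ s := by nlinarith
        omega
      · subst h
        rw [if_pos rfl, if_pos (by nlinarith)]
        congr 1
        have hc : p ^ s * i = i * p ^ s := mul_comm _ _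
        omega
      · rw [if_neg (show ¬(p ^ s * i ≤ u + w' * p ^ s) by push_neg; nlinarith),
          if_neg (show i ≠ w' by omega)]
    rw [Finset.sum_congr rfl hterm]
    simp [Finset.mem_range.mpr hw']
  have h0 := main 0 hp.pos
  simp only [zero_mul, add_zero] at h0
  rw [main w hw, h0]

lemma fiber_sum {N d : ℕ} [NeZero N] (hd : d ∣ N) (hdpos : 0 < d)
    (F : ZMod N → ℤ) (r : ℕ) (hr : r < d) :
    ∑ m ∈ Finset.univ.filter (fun m : ZMod N => m.val % d = r), F m
      = ∑ i ∈ Finset.range (N / d), F (((i * d + r : ℕ) : ZMod N)) := by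
  have hNpos : 0 < N := Nat.pos_of_ne_zero (NeZero.ne N)
  have hbound : ∀ i, i < N / d → i * d + r < N := by
    intro i hi
    have h1 : i + 1 ≤ N / d := hi
    have h2 : (i + 1) * d ≤ (N / d) * d := Nat.mul_le_mul_right d h1
    rw [Nat.div_mul_cancel hd] at h2
    calc i * d + r < i * d + d := by omega
      _ = (i + 1) * d := by ring
      _ ≤ N := h2
  refine Finset.sum_bij' (fun (m : ZMod N) _ => m.val / d)
    (fun i _ => ((i * d + r : ℕ) : ZMod N)) ?_ ?_ ?_ ?_ ?_
  · intro m hm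
    rw [Finset.mem_range]
    exact Nat.div_lt_div_of_lt_of_dvd hd (ZMod.val_lt m)
  · intro i hi
    rw [Finset.mem_range] at hi
    rw [Finset.mem_filter]
    refine ⟨Finset.mem_univ _, ?_⟩
    rw [ZMod.val_cast_of_lt (hbound i hi), add_comm, Nat.add_mul_mod_self_right,
      Nat.mod_eq_of_lt hr]
  · intro m hm
    obtain ⟨-, hm2⟩ := Finset.mem_filter.mp hm
    have hval : m.val / d * d + r = m.val := by
      have h5 := Nat.div_add_mod m.val d
      have h6 : m.val / d * d = d * (m.val / d) := mul_comm _ _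
      omega
    show ((m.val / d * d + r : ℕ) : ZMod N) = m
    rw [hval]
    exact (ZMod.natCast_val m).trans (ZMod.cast_id _ _)
  · intro i hi
    rw [Finset.mem_range] at hi
    show (((i * d + r : ℕ) : ZMod N)).val / d = i
    rw [ZMod.val_cast_of_lt (hbound i hi)]
    rw [add_comm, Nat.add_mul_div_right _ _ hdpos, Nat.div_eq_of_lt hr, zero_add]
  · intro m hm
    obtain ⟨-, hm2⟩ := Finset.mem_filter.mp hm
    have hval : m.val / d * d + r = m.val := by
      have h5 := Nat.div_add_mod m.val d
      have h6 : m.val / d * d = d * (m.val / d) := mul_comm _ _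
      omega
    show F m = F ((m.val / d * d + r : ℕ) : ZMod N)
    rw [hval, (ZMod.natCast_val m).trans (ZMod.cast_id _ _)]

lemma no_vanishing {p k : ℕ} [NeZero (p ^ k)] (hp : p.Prime) (hk : 1 ≤ k) (b : ZMod (p ^ k) → ℤ)
    (hb : ∀ m : ZMod (p ^ k), ((p : ℤ) ^ k) ∣ b m - m.val)
    {ζ : ℂ} (hζn : ζ ^ (p ^ k) = 1) (hζ1 : ζ ≠ 1)
    (hsum : ∑ m : ZMod (p ^ k), (b m : ℂ) * ζ ^ m.val = 0) : False := by
  have hNpos : 0 < p ^ k := pow_pos hp.pos k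
  have hζdvd : orderOf ζ ∣ p ^ k := orderOf_dvd_of_pow_eq_one hζn
  set d := orderOf ζ with hd
  have hd1 : d ≠ 1 := fun h => hζ1 (orderOf_eq_one_iff.mp h)
  have hd0 : d ≠ 0 := by
    intro h
    rw [h] at hζdvd
    exact hNpos.ne' (zero_dvd_iff.mp hζdvd)
  have hdpos : 0 < d := Nat.pos_of_ne_zero hd0
  obtain ⟨i, hik, hdi⟩ := (Nat.dvd_prime_pow hp).mp hζdvd
  have hi0 : i ≠ 0 := by
    rintro rfl
    rw [pow_zero] at hdi
    exact hd1 hdi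
  obtain ⟨s, rfl⟩ : ∃ s, i = s + 1 := ⟨i - 1, by omega⟩
  have hζprim : IsPrimitiveRoot ζ d := IsPrimitiveRoot.orderOf ζ
  set B : ℕ → ℤ := fun r =>
    ∑ m ∈ Finset.univ.filter (fun m : ZMod (p ^ k) => m.val % d = r), b m with hB
  set Q : Polynomial ℚ := ∑ r ∈ Finset.range d, Polynomial.monomial r ((B r : ℚ)) with hQ
  have hQcoeff : ∀ r, r < d → Q.coeff r = (B r : ℚ) := by
    intro r hr
    rw [hQ, Polynomial.finset_sum_coeff]
    rw [Finset.sum_eq_single r]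
    · rw [Polynomial.coeff_monomial, if_pos rfl]
    · intro r' _ hne
      rw [Polynomial.coeff_monomial, if_neg hne]
    · intro habs
      exact absurd (Finset.mem_range.mpr hr) habs
  have hQdeg : Q.degree < ((d : ℕ) : WithBot ℕ) := by
    rw [hQ]
    apply lt_of_le_of_lt (Polynomial.degree_sum_le _ _)
    rw [Finset.sup_lt_iff (by exact_mod_cast WithBot.bot_lt_coe d)]
    intro r hr
    exact lt_of_le_of_lt (Polynomial.degree_monomial_le r _)
      (by exact_mod_cast Finset.mem_range.mp hr)
  have hQroot : Polynomial.aeval ζ Q = 0 := by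
    have step1 : Polynomial.aeval ζ Q = ∑ r ∈ Finset.range d, (B r : ℂ) * ζ ^ r := by
      rw [hQ, map_sum]
      refine Finset.sum_congr rfl fun r _ => ?_
      rw [Polynomial.aeval_monomial, map_intCast]
    have step2 : ∀ r ∈ Finset.range d,
        (B r : ℂ) * ζ ^ r
          = ∑ m ∈ Finset.univ.filter (fun m : ZMod (p ^ k) => m.val % d = r),
              (b m : ℂ) * ζ ^ (m.val % d) := by
      intro r _
      rw [hB]
      push_cast
      rw [Finset.sum_mul]
      refine Finset.sum_congr rfl fun m hm => ?_
      rw [(Finset.mem_filter.mp hm).2]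
    rw [step1, Finset.sum_congr rfl step2,
      Finset.sum_fiberwise_of_maps_to
        (fun m _ => Finset.mem_range.mpr (Nat.mod_lt _ hdpos))]
    rw [← hsum]
    refine Finset.sum_congr rfl fun m _ => ?_
    rw [pow_mod_orderOf]
  have hcyc : Polynomial.cyclotomic d ℚ ∣ Q := by
    rw [Polynomial.cyclotomic_eq_minpoly_rat hζprim hdpos]
    exact minpoly.dvd ℚ ζ hQroot
  have hps_lt : p ^ s < d := by
    rw [hdi]
    exact Nat.pow_lt_pow_right hp.one_lt (lt_add_one s)
  have hkey := coeff_of_cyclo (Q := Q) hp (hdi ▸ hQdeg) (hdi ▸ hcyc)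
    (u := 0) (w := 1) (pow_pos hp.pos s) hp.one_lt
  rw [zero_add, one_mul] at hkey
  have hBeq : B (p ^ s) = B 0 := by
    rw [hQcoeff _ hps_lt, hQcoeff _ hdpos] at hkey
    exact_mod_cast hkey
  -- fiber sums
  have h1 : B (p ^ s) = ∑ i ∈ Finset.range (p ^ k / d), b (((i * d + p ^ s : ℕ) : ZMod (p ^ k))) :=
    fiber_sum (N := p ^ k) hζdvd hdpos b (p ^ s) hps_lt
  have h0 : B 0 = ∑ i ∈ Finset.range (p ^ k / d), b (((i * d + 0 : ℕ) : ZMod (p ^ k))) :=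
    fiber_sum (N := p ^ k) hζdvd hdpos b 0 hdpos
  rw [h1, h0] at hBeq
  have hbound : ∀ i r : ℕ, i < p ^ k / d → r < d → i * d + r < p ^ k := by
    intro i r hi hr
    have h2 : (i + 1) * d ≤ (p ^ k / d) * d := Nat.mul_le_mul_right d hi
    rw [Nat.div_mul_cancel hζdvd] at h2
    have h7 : (i + 1) * d = i * d + d := by ring
    calc i * d + r < (i + 1) * d := by omega
      _ ≤ p ^ k := h2
  have hterm : ∀ i ∈ Finset.range (p ^ k / d),
      ((p : ℤ) ^ k) ∣ (b (((i * d + p ^ s : ℕ) : ZMod (p ^ k)))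
        - b (((i * d + 0 : ℕ) : ZMod (p ^ k))) - (p : ℤ) ^ s) := by
    intro i hi
    rw [Finset.mem_range] at hi
    have hv1 : (((i * d + p ^ s : ℕ) : ZMod (p ^ k))).val = i * d + p ^ s :=
      ZMod.val_cast_of_lt (hbound i _ hi hps_lt)
    have hv0 : (((i * d + 0 : ℕ) : ZMod (p ^ k))).val = i * d + 0 :=
      ZMod.val_cast_of_lt (hbound i _ hi hdpos)
    have d1 := hb (((i * d + p ^ s : ℕ) : ZMod (p ^ k)))
    have d0 := hb (((i * d + 0 : ℕ) : ZMod (p ^ k)))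
    rw [hv1] at d1
    rw [hv0] at d0
    have : (b (((i * d + p ^ s : ℕ) : ZMod (p ^ k)))
        - b (((i * d + 0 : ℕ) : ZMod (p ^ k))) - (p : ℤ) ^ s)
        = (b (((i * d + p ^ s : ℕ) : ZMod (p ^ k))) - ((i * d + p ^ s : ℕ) : ℤ))
          - (b (((i * d + 0 : ℕ) : ZMod (p ^ k))) - ((i * d + 0 : ℕ) : ℤ)) := by
      push_cast
      ring
    rw [this]
    exact dvd_sub d1 d0
  have hdvdsum := Finset.dvd_sum hterm
  have hsum_eq : ∑ i ∈ Finset.range (p ^ k / d),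
      (b (((i * d + p ^ s : ℕ) : ZMod (p ^ k)))
        - b (((i * d + 0 : ℕ) : ZMod (p ^ k))) - (p : ℤ) ^ s)
      = -(((p ^ k / d : ℕ) : ℤ) * (p : ℤ) ^ s) := by
    rw [Finset.sum_sub_distrib, Finset.sum_sub_distrib, hBeq, sub_self, zero_sub,
      Finset.sum_const, Finset.card_range, nsmul_eq_mul]
  rw [hsum_eq, dvd_neg] at hdvdsum
  -- hdvdsum : (p:ℤ)^k ∣ (p^k/d : ℕ) * (p:ℤ)^s
  have hcard : (p ^ k / d : ℕ) = p ^ (k - (s + 1)) := by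
    rw [hdi, Nat.pow_div hik hp.pos]
  rw [hcard] at hdvdsum
  have : ((p ^ (k - (s + 1)) : ℕ) : ℤ) * (p : ℤ) ^ s = (p : ℤ) ^ (k - 1) := by
    push_cast
    rw [← pow_add]
    congr 1
    omega
  rw [this] at hdvdsum
  have hle : (p : ℤ) ^ k ≤ (p : ℤ) ^ (k - 1) :=
    Int.le_of_dvd (pow_pos (by exact_mod_cast hp.pos) _) hdvdsum
  have hlt : (p : ℤ) ^ (k - 1) < (p : ℤ) ^ k :=
    pow_lt_pow_right₀ (by exact_mod_cast hp.one_lt) (by omega)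
  omega

/-- If a Hermitian circulant `Circ(a₀,…,a_{n-1})` has universal perfect state
transfer and `n` is a prime, the square of a prime, or a power of two, then the
circulant is dense: `a_j ≠ 0` for all `j ≠ 0`. -/
theorem stmt_10 {n : ℕ} [NeZero n] (a : ZMod n → ℂ)
    (hHerm : (Circ a).IsHermitian) (hU : upst (Circ a))
    (hn : n.Prime ∨ (∃ p : ℕ, p.Prime ∧ n = p ^ 2) ∨ (∃ k : ℕ, n = 2 ^ k)) :
    ∀ j : ZMod n, j ≠ 0 → a j ≠ 0 := by
  -- reduce to prime powers
  have hpk : (∃ p k : ℕ, p.Prime ∧ 1 ≤ k ∧ n = p ^ k) ∨ n = 1 := by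
    rcases hn with h | ⟨p, hp, h⟩ | ⟨k, h⟩
    · exact Or.inl ⟨n, 1, h, le_refl 1, (pow_one n).symm⟩
    · exact Or.inl ⟨p, 2, hp, by norm_num, h⟩
    · rcases Nat.eq_zero_or_pos k with hk | hk
      · subst hk; exact Or.inr (by simpa using h)
      · exact Or.inl ⟨2, k, Nat.prime_two, hk, h⟩
  rcases hpk with ⟨p, k, hp, hk1, rfl⟩ | rfl
  swap
  · intro j hj
    exact absurd (Subsingleton.elim j 0) hj
  intro j hj haj
  classical
  have hn0 : (p ^ k : ℕ) ≠ 0 := NeZero.ne _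
  have hnC : ((p ^ k : ℕ) : ℂ) ≠ 0 := by exact_mod_cast hn0
  -- eigenvalues
  set lam : ZMod (p ^ k) → ℂ := fun m => ∑ l : ZMod (p ^ k), a l * chr (p ^ k) (l * m)
    with hlam
  -- Fourier matrices
  set P : Matrix (ZMod (p ^ k)) (ZMod (p ^ k)) ℂ :=
    Matrix.of fun j m => chr (p ^ k) (j * m) with hP
  set Qm : Matrix (ZMod (p ^ k)) (ZMod (p ^ k)) ℂ :=
    Matrix.of fun m u => ((p ^ k : ℕ) : ℂ)⁻¹ * chr (p ^ k) (-(m * u)) with hQm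
  have hcard : (Finset.univ : Finset (ZMod (p ^ k))).card = p ^ k := by
    rw [Finset.card_univ, ZMod.card]
  have hPQ : P * Qm = 1 := by
    ext x u
    rw [Matrix.mul_apply]
    have hterm : ∀ m, P x m * Qm m u
        = ((p ^ k : ℕ) : ℂ)⁻¹ * chr (p ^ k) ((x - u) * m) := by
      intro m
      show chr (p ^ k) (x * m) * (((p ^ k : ℕ) : ℂ)⁻¹ * chr (p ^ k) (-(m * u)))
        = ((p ^ k : ℕ) : ℂ)⁻¹ * chr (p ^ k) ((x - u) * m)
      rw [← mul_assoc, mul_comm (chr _ _) (((p ^ k : ℕ) : ℂ)⁻¹), mul_assoc, ← chr_add]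
      congr 2
      ring
    rw [Finset.sum_congr rfl fun m _ => hterm m, ← Finset.mul_sum]
    by_cases h : x = u
    · subst h
      rw [Matrix.one_apply_eq]
      have : ∀ m : ZMod (p ^ k), chr (p ^ k) ((x - x) * m) = 1 := by
        intro m
        rw [sub_self, zero_mul, chr_zero]
      rw [Finset.sum_congr rfl fun m _ => this m, Finset.sum_const, hcard, nsmul_eq_mul,
        mul_one, inv_mul_cancel₀ hnC]
    · rw [Matrix.one_apply_ne h, chr_sum_eq_zero (sub_ne_zero.mpr h), mul_zero]
  have hQP : Qm * P = 1 := mul_eq_one_comm.mp hPQ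
  have hCP : Circ a * P = P * Matrix.diagonal lam := by
    ext x m
    rw [Matrix.mul_apply, Matrix.mul_diagonal]
    have step1 : ∑ y : ZMod (p ^ k), Circ a x y * P y m
        = ∑ l : ZMod (p ^ k), a l * chr (p ^ k) ((l + x) * m) := by
      refine (Fintype.sum_equiv (Equiv.addRight x)
        (fun l => a l * chr (p ^ k) ((l + x) * m))
        (fun y => Circ a x y * P y m) fun l => ?_).symm
      show a l * chr (p ^ k) ((l + x) * m) = a ((l + x) - x) * chr (p ^ k) ((l + x) * m)
      rw [add_sub_cancel_right]
    rw [step1]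
    have step2 : ∀ l : ZMod (p ^ k), a l * chr (p ^ k) ((l + x) * m)
        = chr (p ^ k) (x * m) * (a l * chr (p ^ k) (l * m)) := by
      intro l
      have : (l + x) * m = l * m + x * m := by ring
      rw [this, chr_add]
      ring
    rw [Finset.sum_congr rfl fun l _ => step2 l, ← Finset.mul_sum]
    rfl
  have hC : Circ a = P * Matrix.diagonal lam * Qm := by
    calc Circ a = Circ a * (P * Qm) := by rw [hPQ, Matrix.mul_one]
      _ = Circ a * P * Qm := by rw [Matrix.mul_assoc]
      _ = P * Matrix.diagonal lam * Qm := by rw [hCP]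
  set Uu : (Matrix (ZMod (p ^ k)) (ZMod (p ^ k)) ℂ)ˣ := ⟨P, Qm, hPQ, hQP⟩ with hUu
  have hqwalk : ∀ t : ℝ, qwalk (Circ a) t
      = P * Matrix.diagonal (fun m => Complex.exp (-(Complex.I * t) * lam m)) * Qm := by
    intro t
    unfold qwalk
    rw [hC]
    have h1 : (-(Complex.I * (t : ℂ))) • (P * Matrix.diagonal lam * Qm)
        = (Uu : Matrix _ _ ℂ) * ((-(Complex.I * (t : ℂ))) • Matrix.diagonal lam)
          * ((Uu⁻¹ : (Matrix _ _ ℂ)ˣ) : Matrix _ _ ℂ) := by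
      have : ((Uu⁻¹ : (Matrix _ _ ℂ)ˣ) : Matrix _ _ ℂ) = Qm := rfl
      rw [this]
      show (-(Complex.I * (t : ℂ))) • (P * Matrix.diagonal lam * Qm)
        = P * ((-(Complex.I * (t : ℂ))) • Matrix.diagonal lam) * Qm
      rw [Matrix.mul_smul, Matrix.smul_mul]
    rw [h1, Matrix.exp_units_conj]
    have h2 : (-(Complex.I * (t : ℂ))) • Matrix.diagonal lam
        = Matrix.diagonal (fun m => -(Complex.I * (t : ℂ)) * lam m) := by
      rw [← Matrix.diagonal_smul]
      congr 1
    have h3 : NormedSpace.exp (Matrix.diagonal fun m => -(Complex.I * (t : ℂ)) * lam m)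
        = Matrix.diagonal (fun m => Complex.exp (-(Complex.I * t) * lam m)) := by
      rw [Matrix.exp_diagonal, Pi.exp_def, ← Complex.exp_eq_exp_ℂ]
    rw [h2, h3]
    rfl
  have hentry : ∀ (t : ℝ) (v u : ZMod (p ^ k)), qwalk (Circ a) t v u
      = ((p ^ k : ℕ) : ℂ)⁻¹ * ∑ m, Complex.exp (-(Complex.I * t) * lam m)
          * (chr (p ^ k) (v * m) * chr (p ^ k) (-(m * u))) := by
    intro t v u
    rw [hqwalk t]
    rw [Matrix.mul_apply]
    have : ∀ m, (P * Matrix.diagonal fun m' => Complex.exp (-(Complex.I * t) * lam m')) v m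
        * Qm m u = ((p ^ k : ℕ) : ℂ)⁻¹ * (Complex.exp (-(Complex.I * t) * lam m)
          * (chr (p ^ k) (v * m) * chr (p ^ k) (-(m * u)))) := by
      intro m
      rw [Matrix.mul_diagonal]
      show P v m * Complex.exp (-(Complex.I * t) * lam m)
          * (((p ^ k : ℕ) : ℂ)⁻¹ * chr (p ^ k) (-(m * u))) = _
      show chr (p ^ k) (v * m) * Complex.exp (-(Complex.I * t) * lam m)
          * (((p ^ k : ℕ) : ℂ)⁻¹ * chr (p ^ k) (-(m * u))) = _
      ring
    rw [Finset.sum_congr rfl fun m _ => this m, ← Finset.mul_sum]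
  -- reality of eigenvalues
  have hconj : ∀ x : ZMod (p ^ k), (starRingEnd ℂ) (a x) = a (-x) := by
    intro x
    have := congrFun (congrFun hHerm x) 0
    simpa [Matrix.conjTranspose_apply, Circ] using this
  have hlamreal : ∀ m, lam m = (((lam m).re : ℝ) : ℂ) := by
    intro m
    have hc : (starRingEnd ℂ) (lam m) = lam m := by
      rw [hlam]
      simp only [map_sum, _root_.map_mul]
      refine Fintype.sum_equiv (Equiv.neg (ZMod (p ^ k)))
        (fun l => (starRingEnd ℂ) (a l) * (starRingEnd ℂ) (chr (p ^ k) (l * m)))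
        (fun l => a l * chr (p ^ k) (l * m)) fun l => ?_
      show (starRingEnd ℂ) (a l) * (starRingEnd ℂ) (chr (p ^ k) (l * m))
        = a (-l) * chr (p ^ k) (-l * m)
      rw [hconj, chr_conj]
      congr 2
      ring
    exact ((Complex.conj_eq_iff_re.mp hc)).symm
  set r : ZMod (p ^ k) → ℝ := fun m => (lam m).re with hrdef
  obtain ⟨t, ht, hpst⟩ := hU 0 1
  rw [pst, hentry t 1 0] at hpst
  have hsimp : ∀ m : ZMod (p ^ k),
      Complex.exp (-(Complex.I * t) * lam m)
        * (chr (p ^ k) (1 * m) * chr (p ^ k) (-(m * 0)))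
      = Complex.exp (-(Complex.I * t) * ((r m : ℝ) : ℂ)) * chr (p ^ k) m := by
    intro m
    rw [one_mul, mul_zero, neg_zero, chr_zero, mul_one, ← hlamreal m]
  rw [Finset.sum_congr rfl fun m _ => hsimp m] at hpst
  set f : ZMod (p ^ k) → ℂ :=
    fun m => Complex.exp (-(Complex.I * t) * ((r m : ℝ) : ℂ)) * chr (p ^ k) m with hf
  have habs1 : ∀ m, ‖f m‖ = 1 := by
    intro m
    rw [hf]
    show ‖Complex.exp (-(Complex.I * t) * ((r m : ℝ) : ℂ)) * chr (p ^ k) m‖ = 1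
    rw [norm_mul, chr_abs, Complex.norm_exp]
    have : (-(Complex.I * (t : ℂ)) * ((r m : ℝ) : ℂ)).re = 0 := by
      simp
    rw [this, Real.exp_zero, one_mul]
  have hsumabs : ‖∑ m, f m‖ = (p ^ k : ℕ) := by
    rw [norm_mul] at hpst
    have h4 : ‖((p ^ k : ℕ) : ℂ)⁻¹‖ = (((p ^ k : ℕ) : ℝ))⁻¹ := by
      rw [norm_inv, Complex.norm_natCast]
    rw [h4] at hpst
    have h5 : ((p ^ k : ℕ) : ℝ) ≠ 0 := by exact_mod_cast hn0
    push_cast at hpst ⊢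
    field_simp at hpst
    rw [div_eq_one_iff_eq (pow_ne_zero k (show (p:ℝ) ≠ 0 by exact_mod_cast hp.pos.ne'))] at hpst
    exact hpst
  have htri := triangle_eq f habs1 hsumabs
  -- turn into exponential equation and extract integers
  set cN : ℝ := 2 * Real.pi / ((p ^ k : ℕ) : ℝ) with hcN
  have hNne : ((p ^ k : ℕ) : ℝ) ≠ 0 := by exact_mod_cast hn0
  have hcNC : ((cN : ℝ) : ℂ) * Complex.I = 2 * Real.pi * Complex.I / ((p ^ k : ℕ) : ℂ) := by
    rw [hcN]
    push_cast
    field_simp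
  have h7 : ∀ m : ZMod (p ^ k),
      chr (p ^ k) m = Complex.exp ((m.val : ℂ) * (((cN : ℝ) : ℂ) * Complex.I)) := by
    intro m
    show Complex.exp (2 * Real.pi * Complex.I / ((p ^ k : ℕ) : ℂ)) ^ m.val = _
    rw [← Complex.exp_nat_mul, hcNC]
  have hexp : ∀ m : ZMod (p ^ k),
      Complex.exp (-(Complex.I * t) * ((r m : ℝ) : ℂ)
        + (m.val : ℂ) * (((cN : ℝ) : ℂ) * Complex.I))
      = Complex.exp (-(Complex.I * t) * ((r 0 : ℝ) : ℂ)) := by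
    intro m
    have h6 : Complex.exp (-(Complex.I * t) * ((r m : ℝ) : ℂ)) * chr (p ^ k) m
        = Complex.exp (-(Complex.I * t) * ((r 0 : ℝ) : ℂ)) * chr (p ^ k) (0 : ZMod (p ^ k)) :=
      htri m
    rw [h7 m, ← Complex.exp_add, chr_zero, mul_one] at h6
    exact h6
  have hKex : ∀ m : ZMod (p ^ k), ∃ K : ℤ,
      -(Complex.I * t) * ((r m : ℝ) : ℂ) + (m.val : ℂ) * (((cN : ℝ) : ℂ) * Complex.I)
      = -(Complex.I * t) * ((r 0 : ℝ) : ℂ) + K * (2 * Real.pi * Complex.I) := by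
    intro m
    exact Complex.exp_eq_exp_iff_exists_int.mp (hexp m)
  choose K hK using hKex
  have him : ∀ m : ZMod (p ^ k),
      -(t * r m) + (m.val : ℝ) * cN = -(t * r 0) + (K m : ℝ) * (2 * Real.pi) := by
    intro m
    have h9 := congrArg Complex.im (hK m)
    simpa [Complex.add_im, Complex.mul_im, Complex.ofReal_im, Complex.natCast_im,
      Complex.intCast_im, Complex.I_im, Complex.I_re, Complex.ofReal_re,
      Complex.natCast_re, Complex.intCast_re, -ZMod.natCast_val] using h9
  set b : ZMod (p ^ k) → ℤ := fun m => (m.val : ℤ) - (p ^ k : ℕ) * K m with hb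
  have hb2 : ∀ m, (t * ((p ^ k : ℕ) : ℝ)) * r m
      = (t * ((p ^ k : ℕ) : ℝ)) * r 0 + 2 * Real.pi * ((b m : ℤ) : ℝ) := by
    intro m
    have h10 := him m
    have h11 : (-(t * r m) + (m.val : ℝ) * cN) * ((p ^ k : ℕ) : ℝ)
        = (-(t * r 0) + (K m : ℝ) * (2 * Real.pi)) * ((p ^ k : ℕ) : ℝ) := by rw [h10]
    rw [hcN, add_mul, add_mul, mul_assoc ((m.val : ℝ)) _ _,
      div_mul_cancel₀ _ hNne] at h11
    rw [hb]
    push_cast at h11 ⊢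
    linear_combination (-1 : ℝ) * h11
  -- inversion identity
  have hζdef : True := trivial
  set ζ : ℂ := chr (p ^ k) (-j) with hζ
  have hζpow : ∀ m : ZMod (p ^ k), chr (p ^ k) (-(j * m)) = ζ ^ m.val := by
    intro m
    rw [hζ, ← chr_mul]
    congr 1
    ring
  have hchrsum : ∑ m : ZMod (p ^ k), chr (p ^ k) (-(j * m)) = 0 := by
    have : ∀ m : ZMod (p ^ k), -(j * m) = (-j) * m := fun m => by ring
    rw [Finset.sum_congr rfl fun m _ => congrArg (chr (p ^ k)) (this m)]
    exact chr_sum_eq_zero (neg_ne_zero.mpr hj)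
  have hinv : ∑ m : ZMod (p ^ k), lam m * chr (p ^ k) (-(j * m)) = 0 := by
    have hswap : ∑ m : ZMod (p ^ k), lam m * chr (p ^ k) (-(j * m))
        = ∑ l : ZMod (p ^ k), a l * ∑ m : ZMod (p ^ k), chr (p ^ k) ((l - j) * m) := by
      rw [hlam]
      simp only [Finset.sum_mul]
      rw [Finset.sum_comm]
      refine Finset.sum_congr rfl fun l _ => ?_
      rw [Finset.mul_sum]
      refine Finset.sum_congr rfl fun m _ => ?_
      rw [mul_assoc, ← chr_add]
      congr 2
      ring
    rw [hswap]
    have hterm : ∀ l : ZMod (p ^ k),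
        a l * ∑ m : ZMod (p ^ k), chr (p ^ k) ((l - j) * m)
        = if l = j then a l * (p ^ k : ℕ) else 0 := by
      intro l
      by_cases h : l = j
      · subst h
        rw [if_pos rfl]
        have : ∀ m : ZMod (p ^ k), chr (p ^ k) ((l - l) * m) = 1 := by
          intro m
          rw [sub_self, zero_mul, chr_zero]
        rw [Finset.sum_congr rfl fun m _ => this m, Finset.sum_const, hcard, nsmul_eq_mul,
          mul_one]
      · rw [if_neg h, chr_sum_eq_zero (sub_ne_zero.mpr h), mul_zero]
    rw [Finset.sum_congr rfl fun l _ => hterm l, Finset.sum_ite_eq' Finset.univ j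
      fun l => a l * (p ^ k : ℕ)]
    rw [if_pos (Finset.mem_univ j), haj, zero_mul]
  -- final vanishing sum
  have hfinal : ∑ m : ZMod (p ^ k), ((b m : ℤ) : ℂ) * ζ ^ m.val = 0 := by
    have hstep : ∀ m : ZMod (p ^ k),
        ((t : ℂ) * ((p ^ k : ℕ) : ℂ)) * (lam m * chr (p ^ k) (-(j * m)))
        = ((t : ℂ) * ((p ^ k : ℕ) : ℂ) * ((r 0 : ℝ) : ℂ)) * chr (p ^ k) (-(j * m))
          + (2 * Real.pi : ℝ) * (((b m : ℤ) : ℂ) * ζ ^ m.val) := by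
      intro m
      rw [hlamreal m, ← hζpow m]
      have h12 : ((t : ℂ) * ((p ^ k : ℕ) : ℂ)) * ((r m : ℝ) : ℂ)
          = (t : ℂ) * ((p ^ k : ℕ) : ℂ) * ((r 0 : ℝ) : ℂ)
            + ((2 * Real.pi : ℝ) : ℂ) * ((b m : ℤ) : ℂ) := by
        have := hb2 m
        have hcast := congrArg (fun x : ℝ => (x : ℂ)) this
        push_cast at hcast ⊢
        linear_combination hcast
      calc ((t : ℂ) * ((p ^ k : ℕ) : ℂ)) * (((r m : ℝ) : ℂ) * chr (p ^ k) (-(j * m)))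
          = (((t : ℂ) * ((p ^ k : ℕ) : ℂ)) * ((r m : ℝ) : ℂ)) * chr (p ^ k) (-(j * m)) := by
            ring
        _ = ((t : ℂ) * ((p ^ k : ℕ) : ℂ) * ((r 0 : ℝ) : ℂ)
              + ((2 * Real.pi : ℝ) : ℂ) * ((b m : ℤ) : ℂ)) * chr (p ^ k) (-(j * m)) := by
            rw [h12]
        _ = _ := by push_cast; ring
    have hsum2 : (0 : ℂ) = ((t : ℂ) * ((p ^ k : ℕ) : ℂ) * ((r 0 : ℝ) : ℂ))
          * (∑ m : ZMod (p ^ k), chr (p ^ k) (-(j * m)))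
        + ((2 * Real.pi : ℝ) : ℂ) * ∑ m : ZMod (p ^ k), ((b m : ℤ) : ℂ) * ζ ^ m.val := by
      calc (0 : ℂ) = ((t : ℂ) * ((p ^ k : ℕ) : ℂ))
            * ∑ m : ZMod (p ^ k), lam m * chr (p ^ k) (-(j * m)) := by rw [hinv, mul_zero]
        _ = ∑ m : ZMod (p ^ k), ((t : ℂ) * ((p ^ k : ℕ) : ℂ))
            * (lam m * chr (p ^ k) (-(j * m))) := by rw [Finset.mul_sum]
        _ = _ := by
            rw [Finset.sum_congr rfl fun m _ => hstep m, Finset.sum_add_distrib,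
              ← Finset.mul_sum, ← Finset.mul_sum]
    rw [hchrsum, mul_zero, zero_add] at hsum2
    have hpi : ((2 * Real.pi : ℝ) : ℂ) ≠ 0 := by
      simp [Real.pi_ne_zero]
    exact (mul_eq_zero.mp hsum2.symm).resolve_left hpi
  -- apply the number-theoretic lemma
  have hζn : ζ ^ (p ^ k) = 1 := by
    rw [hζ]
    show (Complex.exp (2 * Real.pi * Complex.I / ((p ^ k : ℕ) : ℂ)) ^ (-j).val) ^ (p ^ k) = 1
    rw [← pow_mul, mul_comm ((-j).val) (p ^ k), pow_mul,
      (chr_root (n := p ^ k)).pow_eq_one, one_pow]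
  have hζ1 : ζ ≠ 1 := chr_ne_one (neg_ne_zero.mpr hj)
  have hbdvd : ∀ m : ZMod (p ^ k), ((p : ℤ) ^ k) ∣ b m - m.val := by
    intro m
    rw [hb]
    refine ⟨-K m, ?_⟩
    push_cast
    ring
  exact no_vanishing hp hk1 b hbdvd hζn hζ1 hfinal
end

section
/- Let p be a prime and n = p². Let λ_0,…,λ_{n−1} be rational numbers and define a_j = (1/n)·∑_{k=0}^{n−1} λ_k ζ_n^{−jk} for j = 0,…,n−1 (so Circ(a_0,…,a_{n−1}) is the circulant with eigenvalues λ_0,…,λ_{n−1}). If a_j ∈ ℚ for some j ∈ {1,…,n−1}, then a_d = a_j where d = gcd(j,n). -/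
open Complex Finset

/-- Let `p` be prime, `n = p²`, let `λ_0,…,λ_{n-1}` be rational numbers and let
`a_j = (1/n) ∑_k λ_k ζ_n^{-jk}` be the coefficients of the circulant with
eigenvalues `λ_0,…,λ_{n-1}`.  If `a_j` is rational for some `j ∈ {1,…,n-1}`, then
`a_d = a_j` where `d = gcd(j,n)`. -/
theorem stmt_12 (p n : ℕ) (hp : p.Prime) (hn : n = p ^ 2)
    (lam : ℕ → ℚ)
    (ζ : ℂ) (hζ : ζ = Complex.exp (2 * Real.pi * Complex.I / n))
    (a : ℕ → ℂ)
    (ha : ∀ m, a m = (1 / (n : ℂ)) * ∑ k ∈ Finset.range n, (lam k : ℂ) * ζ ^ (-(m * k : ℤ)))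
    (j : ℕ) (hj1 : 1 ≤ j) (hj2 : j ≤ n - 1)
    (hrat : ∃ r : ℚ, a j = (r : ℂ)) :
    a (Nat.gcd j n) = a j := by
  have hn0 : 0 < n := hn ▸ pow_pos hp.pos 2
  set d := Nat.gcd j n with hd
  have hj0 : 0 < j := hj1
  have hd0 : 0 < d := Nat.gcd_pos_of_pos_left n hj0
  have hdj : d ∣ j := Nat.gcd_dvd_left j n
  have hdnn : d ∣ n := Nat.gcd_dvd_right j n
  have hjn : j < n := lt_of_le_of_lt hj2 (Nat.sub_lt hn0 one_pos)
  have hdlt : d < n := lt_of_le_of_lt (Nat.le_of_dvd hj0 hdj) hjn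
  -- p divides n/d
  have hpnd : p ∣ n / d := by
    obtain ⟨i, hi2, hdi⟩ := (Nat.dvd_prime_pow hp).1 (hn ▸ hdnn)
    interval_cases i
    · simpa [hdi, hn] using dvd_pow_self p two_ne_zero
    · have : n / d = p := by
        rw [hdi, hn, pow_one, pow_two, Nat.mul_div_cancel_left p hp.pos]
      simp [this]
    · exact absurd hdi (by rw [← hn]; exact fun h => absurd h hdlt.ne)
  have hnd1 : 1 < n / d := lt_of_lt_of_le hp.one_lt (Nat.le_of_dvd (Nat.div_pos (Nat.le_of_dvd hn0 hdnn) hd0) hpnd)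
  -- inverse ℓ of m := j/d mod n/d
  have hm : Nat.Coprime (j / d) (n / d) := Nat.coprime_div_gcd_div_gcd hd0
  obtain ⟨ℓ, -, hℓ⟩ := Nat.exists_mul_mod_eq_one_of_coprime hm hnd1
  -- j*ℓ = q*n + d
  obtain ⟨q, hq⟩ : ∃ q, j * ℓ = q * n + d := by
    refine ⟨(j / d * ℓ) / (n / d), ?_⟩
    have h1 : j / d * ℓ = (j / d * ℓ) / (n / d) * (n / d) + 1 := by
      conv_lhs => rw [← Nat.div_add_mod (j / d * ℓ) (n / d)]
      rw [hℓ]; ring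
    calc j * ℓ = d * (j / d * ℓ) := by rw [← mul_assoc, Nat.mul_div_cancel' hdj]
    _ = d * ((j / d * ℓ) / (n / d) * (n / d) + 1) := by rw [← h1]
    _ = (j / d * ℓ) / (n / d) * (d * (n / d)) + d := by ring
    _ = (j / d * ℓ) / (n / d) * n + d := by rw [Nat.mul_div_cancel' hdnn]
  -- ℓ coprime to n
  have hℓn : Nat.Coprime ℓ n := by
    have h1 : Nat.Coprime (j / d * ℓ) (n / d) := by
      have : Nat.Coprime 1 (n / d) := Nat.coprime_one_left _
      have h2 : j / d * ℓ = 1 + (j / d * ℓ) / (n / d) * (n / d) := by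
        conv_lhs => rw [← Nat.div_add_mod (j / d * ℓ) (n / d)]
        rw [hℓ]; ring
      rw [h2]
      exact (Nat.coprime_add_mul_right_left 1 (n / d) ((j / d * ℓ) / (n / d))).mpr this
    have hℓnd : Nat.Coprime ℓ (n / d) := Nat.Coprime.coprime_dvd_left (dvd_mul_left ℓ _) h1
    have hℓp : Nat.Coprime ℓ p := hℓnd.coprime_dvd_right hpnd
    rw [hn]; exact hℓp.pow_right 2
  -- cyclotomic field setup
  have hζprim : IsPrimitiveRoot ζ n := hζ ▸ Complex.isPrimitiveRoot_exp n hn0.ne'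
  have hζℓprim : IsPrimitiveRoot (ζ ^ ℓ) n := hζprim.pow_of_coprime ℓ hℓn
  set n' : ℕ+ := ⟨n, hn0⟩ with hn'
  have hcoe : ((n' : ℕ) : ℕ) = n := rfl
  let K := CyclotomicField n' ℚ
  haveI : IsCyclotomicExtension {(n' : ℕ)} ℚ K :=
    haveI : NeZero (((n' : ℕ)) : ℚ) := ⟨by simp⟩
    CyclotomicField.isCyclotomicExtension _ _
  let η : K := IsCyclotomicExtension.zeta n' ℚ K
  have hη : IsPrimitiveRoot η n' := IsCyclotomicExtension.zeta_spec n' ℚ K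
  have hirr : Irreducible (Polynomial.cyclotomic (n' : ℕ) ℚ) :=
    Polynomial.cyclotomic.irreducible_rat hn0
  let E := hη.embeddingsEquivPrimitiveRoots ℂ hirr
  let φ : K →ₐ[ℚ] ℂ := E.symm ⟨ζ, (mem_primitiveRoots hn0).2 hζprim⟩
  let ψ : K →ₐ[ℚ] ℂ := E.symm ⟨ζ ^ ℓ, (mem_primitiveRoots hn0).2 hζℓprim⟩
  have hφη : φ η = ζ := by
    have := hη.embeddingsEquivPrimitiveRoots_apply_coe ℂ hirr φ
    rw [show E φ = ⟨ζ, (mem_primitiveRoots hn0).2 hζprim⟩ from E.apply_symm_apply _] at this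
    exact this.symm
  have hψη : ψ η = ζ ^ ℓ := by
    have := hη.embeddingsEquivPrimitiveRoots_apply_coe ℂ hirr ψ
    rw [show E ψ = ⟨ζ ^ ℓ, (mem_primitiveRoots hn0).2 hζℓprim⟩ from E.apply_symm_apply _] at this
    exact this.symm
  -- the element A of K
  set A : K := (1 / (n : K)) * ∑ k ∈ Finset.range n, (lam k : K) * η ^ (-(j * k : ℤ)) with hA
  have hmap : ∀ (f : K →ₐ[ℚ] ℂ), f A =
      (1 / (n : ℂ)) * ∑ k ∈ Finset.range n, (lam k : ℂ) * (f η) ^ (-(j * k : ℤ)) := by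
    intro f
    rw [hA, map_mul, map_sum]
    congr 1
    · rw [map_div₀, map_one, map_natCast]
    · exact Finset.sum_congr rfl fun k _ => by rw [map_mul, map_ratCast, map_zpow₀]
  have hφA : φ A = a j := by rw [hmap φ, hφη, ha j]
  have hψA : ψ A = a d := by
    rw [hmap ψ, hψη, ha d]
    congr 1
    refine Finset.sum_congr rfl fun k _ => ?_
    congr 1
    have hζ0 : ζ ≠ 0 := hζprim.ne_zero hn0.ne'
    rw [← zpow_natCast ζ ℓ, ← zpow_mul]
    have hdvd : (n : ℤ) ∣ ((ℓ : ℤ) * (-(j * k : ℤ)) - (-(d * k : ℤ))) := by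
      refine ⟨-(q * k), ?_⟩
      have : (j : ℤ) * ℓ = q * n + d := by exact_mod_cast hq
      nlinarith [this]
    have h1 : ζ ^ ((ℓ : ℤ) * (-(j * k : ℤ)) - (-(d * k : ℤ))) = 1 :=
      (hζprim.zpow_eq_one_iff_dvd _).2 hdvd
    calc ζ ^ ((ℓ : ℤ) * (-(j * k : ℤ)))
        = ζ ^ ((-(d * k : ℤ)) + ((ℓ : ℤ) * (-(j * k : ℤ)) - (-(d * k : ℤ)))) := by ring_nf
      _ = ζ ^ (-(d * k : ℤ)) * ζ ^ ((ℓ : ℤ) * (-(j * k : ℤ)) - (-(d * k : ℤ))) := zpow_add₀ hζ0 _ _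
      _ = ζ ^ (-(d * k : ℤ)) := by rw [h1, mul_one]
  -- conclude
  obtain ⟨r, hr⟩ := hrat
  have hAr : A = (r : K) := by
    have : φ A = φ (r : K) := by rw [hφA, hr, map_ratCast]
    exact φ.toRingHom.injective this
  rw [← hψA, hAr, map_ratCast, hr]
end

section
/- Let G = Circ(a_0,…,a_{n−1}) be an n×n Hermitian circulant matrix with universal perfect state transfer. If d is an odd divisor of n with 1 ≤ d < n such that n/d is prime, then a_d ≠ 0. -/
open Matrix Complex Finset

noncomputable section StmtAux


noncomputable def ee (n : ℕ) [NeZero n] : ZMod n → ℂ :=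
  fun x => Complex.exp (2 * Real.pi * Complex.I / n) ^ x.val

variable {n : ℕ} [NeZero n]

lemma hzeta (n : ℕ) [NeZero n] :
    IsPrimitiveRoot (Complex.exp (2 * Real.pi * Complex.I / n)) n :=
  Complex.isPrimitiveRoot_exp n (NeZero.ne n)

lemma ee_zero : ee n 0 = 1 := by simp [ee]

lemma ee_add (x y : ZMod n) : ee n (x + y) = ee n x * ee n y := by
  unfold ee
  rw [ZMod.val_add, ← pow_eq_pow_mod _ (hzeta n).pow_eq_one, pow_add]

lemma ee_natmul (k : ℕ) (y : ZMod n) : ee n ((k : ZMod n) * y) = ee n y ^ k := by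
  induction k with
  | zero => simp [ee_zero]
  | succ k ih =>
    push_cast
    rw [add_mul, one_mul, ee_add, ih, pow_succ]

lemma ee_mul (x y : ZMod n) : ee n (x * y) = ee n y ^ x.val := by
  conv_lhs => rw [← ZMod.natCast_rightInverse x]
  exact ee_natmul x.val y

lemma ee_pow_n (x : ZMod n) : ee n x ^ n = 1 := by
  rw [← ee_natmul, ZMod.natCast_self, zero_mul, ee_zero]

lemma ee_abs (x : ZMod n) : ‖ee n x‖ = 1 := by
  have h : ‖ee n x‖ ^ n = 1 := by
    rw [← norm_pow, ee_pow_n]; exact norm_one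
  have h0 : (0:ℝ) ≤ ‖ee n x‖ := norm_nonneg _
  rcases lt_trichotomy (‖ee n x‖) 1 with h1 | h1 | h1
  · exact absurd h (by have := pow_lt_one₀ h0 h1 (NeZero.ne n); linarith)
  · exact h1
  · exact absurd h (by have := one_lt_pow₀ h1 (NeZero.ne n); linarith)

lemma ee_mul_neg (x : ZMod n) : ee n x * ee n (-x) = 1 := by
  rw [← ee_add, add_neg_cancel, ee_zero]

lemma ee_ne_zero (x : ZMod n) : ee n x ≠ 0 := by
  intro h
  have := ee_abs x
  rw [h] at this; simp at this


lemma ee_conj (x : ZMod n) : (starRingEnd ℂ) (ee n x) = ee n (-x) := by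
  have hinv : ee n (-x) = (ee n x)⁻¹ := by
    apply eq_inv_of_mul_eq_one_left
    rw [← ee_add, neg_add_cancel, ee_zero]
  rw [hinv, Complex.inv_eq_conj (ee_abs x)]

lemma ee_ne_one {c : ZMod n} (hc : c ≠ 0) : ee n c ≠ 1 := by
  intro h
  apply hc
  have hdvd : n ∣ c.val := ((hzeta n).pow_eq_one_iff_dvd c.val).mp h
  have := ZMod.val_lt c
  have : c.val = 0 := Nat.eq_zero_of_dvd_of_lt hdvd this
  exact (ZMod.val_eq_zero c).mp this

lemma sum_zmod_val {M : Type*} [AddCommMonoid M] (f : ℕ → M) :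
    ∑ j : ZMod n, f j.val = ∑ k ∈ Finset.range n, f k := by
  refine Finset.sum_nbij' (fun j => j.val) (fun k => (k : ZMod n)) ?_ ?_ ?_ ?_ ?_
  · intro j _; exact Finset.mem_range.mpr (ZMod.val_lt j)
  · intro k _; exact Finset.mem_univ _
  · intro j _; exact ZMod.natCast_rightInverse j
  · intro k hk; exact ZMod.val_cast_of_lt (Finset.mem_range.mp hk)
  · intro j _; rfl

lemma ee_sum (c : ZMod n) : ∑ j : ZMod n, ee n (j * c) = if c = 0 then (n : ℂ) else 0 := by
  split_ifs with hc
  · subst hc; simp [ee_zero, ZMod.card]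
  · simp_rw [ee_mul]
    rw [sum_zmod_val (fun k => ee n c ^ k), geom_sum_eq (ee_ne_one hc), ee_pow_n,
      sub_self, zero_div]


/-- If `re z = abs z` then `z` is the nonnegative real `abs z`. -/
lemma re_eq_abs_imp {z : ℂ} (h : z.re = ‖z‖) : z = (‖z‖ : ℝ) := by
  have h2 : z.im = 0 := by
    have hsq : ‖z‖ ^ 2 = z.re ^ 2 + z.im ^ 2 := by
      rw [Complex.sq_norm, Complex.normSq_apply]; ring
    have h3 : z.re ^ 2 = ‖z‖ ^ 2 := by rw [h]
    have h4 : z.im ^ 2 = 0 := by linarith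
    exact pow_eq_zero_iff two_ne_zero |>.mp h4
  apply Complex.ext
  · simp [h]
  · simp [h2]

/-- Equality case of the triangle inequality for finite sums in ℂ. -/
lemma triangle_eq_s13 {ι : Type*} (s : Finset ι) (f : ι → ℂ)
    (h : ‖∑ i ∈ s, f i‖ = ∑ i ∈ s, ‖f i‖) :
    ∀ i ∈ s, (starRingEnd ℂ) (∑ j ∈ s, f j) * f i
      = ((‖∑ j ∈ s, f j‖ * ‖f i‖ : ℝ) : ℂ) := by
  set S := ∑ j ∈ s, f j with hS
  have key : ∀ i ∈ s, ((starRingEnd ℂ) S * f i).re = ‖S‖ * ‖f i‖ := by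
    have hle : ∀ i ∈ s, ((starRingEnd ℂ) S * f i).re ≤ ‖S‖ * ‖f i‖ := by
      intro i _
      calc ((starRingEnd ℂ) S * f i).re ≤ ‖(starRingEnd ℂ) S * f i‖ :=
            Complex.re_le_norm _
        _ = ‖S‖ * ‖f i‖ := by rw [norm_mul, Complex.norm_conj]
    have hsum : ∑ i ∈ s, ((starRingEnd ℂ) S * f i).re
        = ∑ i ∈ s, ‖S‖ * ‖f i‖ := by
      have : ∑ i ∈ s, ((starRingEnd ℂ) S * f i).re = ((starRingEnd ℂ) S * S).re := by
        rw [hS, Finset.mul_sum]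
        exact (Complex.re_sum s _).symm
      rw [this, mul_comm, Complex.mul_conj', ← Finset.mul_sum, ← h]
      simp [Complex.normSq_eq_norm_sq, sq]
    intro i hi
    by_contra hne
    have hlt : ((starRingEnd ℂ) S * f i).re < ‖S‖ * ‖f i‖ :=
      lt_of_le_of_ne (hle i hi) hne
    have := Finset.sum_lt_sum (fun j hj => hle j hj) ⟨i, hi, hlt⟩
    rw [hsum] at this
    exact lt_irrefl _ this
  intro i hi
  have h1 := key i hi
  have h2 : (starRingEnd ℂ) S * f i = ((‖(starRingEnd ℂ) S * f i‖ : ℝ) : ℂ) := by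
    apply re_eq_abs_imp
    rw [h1, norm_mul, Complex.norm_conj]
  rw [h2, norm_mul, Complex.norm_conj]

/-- Weighted geometric sum identity. -/
lemma geom_weighted (z : ℂ) (N : ℕ) :
    (z - 1) * ∑ k ∈ Finset.range N, (k : ℂ) * z ^ k
      = ((N : ℂ) - 1) * z ^ N - (∑ k ∈ Finset.range N, z ^ k) + 1 := by
  induction N with
  | zero => simp
  | succ N ih =>
    rw [Finset.sum_range_succ, Finset.sum_range_succ (f := fun k => z ^ k)]
    push_cast
    ring_nf
    ring_nf at ih
    linear_combination ih

variable {n : ℕ} [NeZero n]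

lemma ncast_ne_zero : (n : ℂ) ≠ 0 := Nat.cast_ne_zero.mpr (NeZero.ne n)

lemma qwalk_entry (a : ZMod n → ℂ) (t : ℝ) (v u : ZMod n) :
    qwalk (Circ a) t v u
      = (n : ℂ)⁻¹ * ∑ j : ZMod n,
          Complex.exp ((-(Complex.I * t)) * (∑ k : ZMod n, a k * ee n (j * k)))
            * ee n (j * (v - u)) := by
  classical
  set lam : ZMod n → ℂ := fun j => ∑ k : ZMod n, a k * ee n (j * k) with hlam
  set F : Matrix (ZMod n) (ZMod n) ℂ := Matrix.of (fun x j => ee n (x * j)) with hF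
  set Finv : Matrix (ZMod n) (ZMod n) ℂ :=
    Matrix.of (fun j y => (n : ℂ)⁻¹ * ee n (-(j * y))) with hFinv
  have hmix : ∀ x y : ZMod n, ∑ j : ZMod n, ee n (x * j) * ((n : ℂ)⁻¹ * ee n (-(j * y)))
      = if x = y then 1 else 0 := by
    intro x y
    have : ∀ j : ZMod n, ee n (x * j) * ((n : ℂ)⁻¹ * ee n (-(j * y)))
        = (n : ℂ)⁻¹ * ee n (j * (x - y)) := by
      intro j
      rw [show j * (x - y) = x * j + -(j * y) by ring, ee_add]
      ring
    simp_rw [this, ← Finset.mul_sum, ee_sum]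
    rcases eq_or_ne x y with rfl | hxy
    · simp [inv_mul_cancel₀ (ncast_ne_zero (n := n))]
    · simp [sub_eq_zero, hxy]
  have hFF : F * Finv = 1 := by
    ext x y
    rw [Matrix.mul_apply]
    simpa [hF, hFinv, Matrix.one_apply] using hmix x y
  have hF'F : Finv * F = 1 := by
    ext x y
    rw [Matrix.mul_apply]
    have : ∀ j : ZMod n, (n : ℂ)⁻¹ * ee n (-(x * j)) * ee n (j * y)
        = (n : ℂ)⁻¹ * ee n (j * (y - x)) := by
      intro j
      rw [mul_assoc, ← ee_add]
      congr 2
      ring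
    simp only [hF, hFinv, Matrix.of_apply]
    rw [Finset.sum_congr rfl (fun j _ => this j), ← Finset.mul_sum, ee_sum]
    rcases eq_or_ne x y with rfl | hxy
    · simp [Matrix.one_apply, inv_mul_cancel₀ (ncast_ne_zero (n := n))]
    · have : y - x ≠ 0 := sub_ne_zero.mpr (Ne.symm hxy)
      simp [Matrix.one_apply, hxy, this]
  set U : (Matrix (ZMod n) (ZMod n) ℂ)ˣ := ⟨F, Finv, hFF, hF'F⟩ with hU
  have hCF : Circ a * F = F * Matrix.diagonal lam := by
    ext x j
    rw [Matrix.mul_apply, Matrix.mul_diagonal]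
    calc ∑ y : ZMod n, Circ a x y * F y j
        = ∑ k : ZMod n, a k * (ee n (x * j) * ee n (k * j)) := by
          rw [← Equiv.sum_comp (Equiv.addLeft x) (fun y => Circ a x y * F y j)]
          apply Finset.sum_congr rfl
          intro k _
          simp only [Equiv.coe_addLeft, Circ, hF, Matrix.of_apply]
          rw [add_sub_cancel_left, ← ee_add]
          congr 1
          congr 1
          ring
      _ = F x j * lam j := by
          rw [hlam, hF, Finset.mul_sum]
          apply Finset.sum_congr rfl
          intro k _
          simp only [Matrix.of_apply]
          rw [mul_comm j k]
          ring
  have hC : Circ a = F * Matrix.diagonal lam * Finv := by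
    calc Circ a = Circ a * (F * Finv) := by rw [hFF, Matrix.mul_one]
      _ = (Circ a * F) * Finv := by rw [Matrix.mul_assoc]
      _ = F * Matrix.diagonal lam * Finv := by rw [hCF]
  have hsmul : (-(Complex.I * t)) • Circ a
      = F * Matrix.diagonal (fun j => (-(Complex.I * t)) * lam j) * Finv := by
    rw [hC, ← Matrix.smul_mul, ← Matrix.mul_smul, ← Matrix.diagonal_smul]
    rfl
  have hexp : qwalk (Circ a) t
      = F * Matrix.diagonal (fun j => Complex.exp ((-(Complex.I * t)) * lam j)) * Finv := by
    rw [qwalk, hsmul]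
    have := Matrix.exp_units_conj U
      (Matrix.diagonal (fun j => (-(Complex.I * t)) * lam j))
    have hUc : (U : Matrix (ZMod n) (ZMod n) ℂ) = F := rfl
    have hUinv : ((U⁻¹ : (Matrix (ZMod n) (ZMod n) ℂ)ˣ) : Matrix (ZMod n) (ZMod n) ℂ)
        = Finv := rfl
    rw [hUc, hUinv] at this
    rw [this, Matrix.exp_diagonal, Pi.exp_def]
    congr 2
    funext j
    rw [Complex.exp_eq_exp_ℂ]
  rw [hexp]
  rw [Matrix.mul_apply]
  rw [Finset.mul_sum]
  apply Finset.sum_congr rfl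
  intro j _
  rw [Matrix.mul_diagonal]
  simp only [hF, hFinv, Matrix.of_apply]
  rw [show (∑ k : ZMod n, a k * ee n (j * k)) = lam j from rfl]
  have key : ee n (v * j) * ee n (-(j * u)) = ee n (j * (v - u)) := by
    rw [show j * (v - u) = v * j + -(j * u) by ring, ee_add]
  linear_combination ((n:ℂ)⁻¹ * Complex.exp ((-(Complex.I * t)) * lam j)) * key

end StmtAux

open Polynomial in
/-- Let `Circ(a₀,…,a_{n-1})` be a Hermitian circulant with universal perfect state
transfer.  If `d` is an odd divisor of `n` with `1 ≤ d < n` such that `n/d` is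
prime, then `a_d ≠ 0`. -/
theorem stmt_13 {n : ℕ} [NeZero n] (a : ZMod n → ℂ)
    (hHerm : (Circ a).IsHermitian) (hU : upst (Circ a))
    (d : ℕ) (hd : Odd d) (hdvd : d ∣ n) (hd1 : 1 ≤ d) (hdn : d < n)
    (hprime : (n / d).Prime) :
    a (d : ZMod n) ≠ 0 := by
  classical
  intro h0
  set lam : ZMod n → ℂ := fun j => ∑ k : ZMod n, a k * ee n (j * k) with hlam
  -- symmetry from Hermitian
  have hsym : ∀ x : ZMod n, (starRingEnd ℂ) (a x) = a (-x) := by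
    intro x
    have h := congr_fun (congr_fun hHerm 0) (-x)
    simpa [Circ, Matrix.conjTranspose_apply] using h
  -- eigenvalues are real
  have hreal : ∀ j : ZMod n, (starRingEnd ℂ) (lam j) = lam j := by
    intro j
    rw [hlam]
    simp only
    rw [map_sum]
    rw [← Equiv.sum_comp (Equiv.neg (ZMod n))
      (fun k => a k * ee n (j * k))]
    apply Finset.sum_congr rfl
    intro k _
    rw [_root_.map_mul, hsym, ee_conj]
    simp only [Equiv.neg_apply]
    congr 1
    congr 1
    ring
  obtain ⟨r, hr⟩ : ∃ r : ZMod n → ℝ, ∀ j, lam j = (r j : ℂ) :=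
    ⟨fun j => (lam j).re, fun j => (Complex.conj_eq_iff_re.mp (hreal j)).symm⟩
  -- use PST from 1 to 0
  obtain ⟨t, ht, hpst⟩ := hU 1 0
  have hpst' : ‖qwalk (Circ a) t 0 1‖ = 1 := hpst
  set f : ZMod n → ℂ := fun j =>
    (n : ℂ)⁻¹ * (Complex.exp ((-(Complex.I * t)) * lam j) * ee n (j * (0 - 1))) with hf
  have hqe : qwalk (Circ a) t 0 1 = ∑ j : ZMod n, f j := by
    rw [qwalk_entry a t 0 1, Finset.mul_sum]
  have habsf : ∀ j, ‖f j‖ = (n : ℝ)⁻¹ := by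
    intro j
    rw [hf]
    simp only
    rw [norm_mul, norm_mul, ee_abs, norm_inv, Complex.norm_natCast]
    have h1 : (-(Complex.I * (t:ℂ))) * lam j = ((-(t * r j) : ℝ) : ℂ) * Complex.I := by
      rw [hr j]; push_cast; ring
    rw [h1, Complex.norm_exp_ofReal_mul_I]
    ring
  have hsum_abs : ‖∑ j : ZMod n, f j‖ = ∑ j : ZMod n, ‖f j‖ := by
    rw [← hqe, hpst']
    rw [Finset.sum_congr rfl (fun j _ => habsf j), Finset.sum_const, Finset.card_univ,
      ZMod.card, nsmul_eq_mul]
    field_simp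
    exact (div_self (Nat.cast_ne_zero.mpr (NeZero.ne n))).symm
  have hS1 : ‖∑ j : ZMod n, f j‖ = 1 := by rw [← hqe]; exact hpst'
  have key := triangle_eq_s13 Finset.univ f hsum_abs
  have hSne0 : (∑ j : ZMod n, f j) ≠ 0 := by
    intro h
    rw [h] at hS1; simp at hS1
  have hSne : (starRingEnd ℂ) (∑ j : ZMod n, f j) ≠ 0 := by
    intro h
    apply hSne0
    have h' := congrArg (starRingEnd ℂ) h
    simpa using h'
  have hfj : ∀ j : ZMod n, f j = f 0 := by
    intro j
    have h1 := key j (Finset.mem_univ _)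
    have h2 := key 0 (Finset.mem_univ _)
    rw [habsf j, hS1] at h1
    rw [habsf 0, hS1] at h2
    exact mul_left_cancel₀ hSne (h1.trans h2.symm)
  -- phase relation
  have hphase : ∀ j : ZMod n,
      Complex.exp ((-(Complex.I * t)) * lam j)
        = Complex.exp ((-(Complex.I * t)) * lam 0) * ee n j := by
    intro j
    have h := hfj j
    rw [hf] at h
    simp only at h
    have h' := mul_left_cancel₀ (inv_ne_zero (ncast_ne_zero (n := n))) h
    have e0 : ((0 : ZMod n) * (0 - 1)) = 0 := by ring
    rw [e0, ee_zero, mul_one] at h'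
    have e1 : j * (0 - 1) = -j := by ring
    rw [e1] at h'
    calc Complex.exp ((-(Complex.I * t)) * lam j)
        = Complex.exp ((-(Complex.I * t)) * lam j) * (ee n (-j) * ee n j) := by
          rw [← ee_add, neg_add_cancel, ee_zero, mul_one]
      _ = (Complex.exp ((-(Complex.I * t)) * lam j) * ee n (-j)) * ee n j := by ring
      _ = Complex.exp ((-(Complex.I * t)) * lam 0) * ee n j := by rw [h']
  -- integer lifts
  have hlift : ∀ j : ZMod n, ∃ mj : ℤ,
      (-(Complex.I * t)) * lam j
        = (-(Complex.I * t)) * lam 0 + (j.val : ℂ) * (2 * Real.pi * Complex.I / n)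
          + mj * (2 * Real.pi * Complex.I) := by
    intro j
    have hee : ee n j = Complex.exp ((j.val : ℂ) * (2 * Real.pi * Complex.I / n)) := by
      rw [ee, ← Complex.exp_nat_mul]
    have h := hphase j
    rw [hee, ← Complex.exp_add] at h
    obtain ⟨mj, hmj⟩ := Complex.exp_eq_exp_iff_exists_int.mp h
    exact ⟨mj, by linear_combination hmj⟩
  choose m hm using hlift
  -- Fourier inversion with a d = 0
  have hdne : (d : ZMod n) ≠ 0 := by
    rw [Ne, ZMod.natCast_eq_zero_iff]
    intro hdvd'
    have := Nat.le_of_dvd (by omega) hdvd'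
    omega
  have hinv : ∑ j : ZMod n, lam j * ee n (-(j * (d : ZMod n))) = 0 := by
    have step : ∀ k : ZMod n, (∑ j : ZMod n, ee n (j * (k - (d : ZMod n))))
        = if k = (d : ZMod n) then (n : ℂ) else 0 := by
      intro k
      rw [ee_sum]
      simp [sub_eq_zero]
    calc ∑ j : ZMod n, lam j * ee n (-(j * (d : ZMod n)))
        = ∑ j : ZMod n, ∑ k : ZMod n, a k * ee n (j * (k - (d : ZMod n))) := by
          apply Finset.sum_congr rfl
          intro j _
          rw [hlam]
          simp only
          rw [Finset.sum_mul]
          apply Finset.sum_congr rfl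
          intro k _
          rw [mul_assoc, ← ee_add]
          congr 2
          ring
      _ = ∑ k : ZMod n, ∑ j : ZMod n, a k * ee n (j * (k - (d : ZMod n))) :=
          Finset.sum_comm
      _ = ∑ k : ZMod n, a k * (if k = (d : ZMod n) then (n : ℂ) else 0) := by
          apply Finset.sum_congr rfl
          intro k _
          rw [← Finset.mul_sum, step]
      _ = 0 := by
          simp only [mul_ite, mul_zero]
          rw [Finset.sum_ite_eq' Finset.univ ((d : ℕ) : ZMod n) (fun k => a k * n)]
          simp [h0]
  -- pass to powers of z
  set z : ℂ := ee n (-(d : ZMod n)) with hz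
  have hz_ej : ∀ j : ZMod n, ee n (-(j * (d : ZMod n))) = z ^ j.val := by
    intro j
    rw [show -(j * (d : ZMod n)) = j * (-(d : ZMod n)) by ring, ee_mul]
  have hzsum : ∑ j : ZMod n, z ^ j.val = 0 := by
    calc ∑ j : ZMod n, z ^ j.val = ∑ j : ZMod n, ee n (j * (-(d : ZMod n))) := by
          apply Finset.sum_congr rfl
          intro j _
          rw [ee_mul]
      _ = 0 := by rw [ee_sum]; simp [neg_eq_zero, hdne]
  have h2 : ∑ j : ZMod n, ((-(Complex.I * t)) * lam j) * z ^ j.val = 0 := by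
    calc ∑ j : ZMod n, ((-(Complex.I * t)) * lam j) * z ^ j.val
        = (-(Complex.I * t)) * ∑ j : ZMod n, lam j * ee n (-(j * (d : ZMod n))) := by
          rw [Finset.mul_sum]
          apply Finset.sum_congr rfl
          intro j _
          rw [hz_ej j]
          ring
      _ = 0 := by rw [hinv, mul_zero]
  set Q : ℂ := ∑ j : ZMod n, (m j : ℂ) * z ^ j.val with hQ
  have h2pi : (2 * (Real.pi : ℂ) * Complex.I) ≠ 0 := by
    simp [Real.pi_ne_zero, Complex.I_ne_zero]
  have h3 : (-(Complex.I * t)) * lam 0 * (∑ j : ZMod n, z ^ j.val)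
      + (2 * Real.pi * Complex.I / n) * (∑ j : ZMod n, (j.val : ℂ) * z ^ j.val)
      + (2 * Real.pi * Complex.I) * Q = 0 := by
    set A : ℂ := (-(Complex.I * t)) * lam 0 with hA
    have expand : ∀ j : ZMod n, ((-(Complex.I * t)) * lam j) * z ^ j.val
        = A * z ^ j.val
          + (2 * Real.pi * Complex.I / n) * ((j.val : ℂ) * z ^ j.val)
          + (2 * Real.pi * Complex.I) * ((m j : ℂ) * z ^ j.val) := by
      intro j
      rw [hA, hm j]
      ring
    calc A * (∑ j : ZMod n, z ^ j.val)
        + (2 * Real.pi * Complex.I / n) * (∑ j : ZMod n, (j.val : ℂ) * z ^ j.val)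
        + (2 * Real.pi * Complex.I) * Q
        = ∑ j : ZMod n, ((-(Complex.I * t)) * lam j) * z ^ j.val := by
          rw [hQ, Finset.mul_sum, Finset.mul_sum, Finset.mul_sum, ← Finset.sum_add_distrib,
            ← Finset.sum_add_distrib]
          exact Finset.sum_congr rfl fun j _ => (expand j).symm
      _ = 0 := h2
  rw [hzsum, mul_zero, zero_add] at h3
  have h4 : ∑ j : ZMod n, (j.val : ℂ) * z ^ j.val = -(n : ℂ) * Q := by
    have hn : (n : ℂ) ≠ 0 := ncast_ne_zero
    have h5 : (2 * (Real.pi : ℂ) * Complex.I)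
        * ((n : ℂ)⁻¹ * (∑ j : ZMod n, (j.val : ℂ) * z ^ j.val) + Q) = 0 := by
      rw [← h3]
      field_simp
    have h6 : (n : ℂ)⁻¹ * (∑ j : ZMod n, (j.val : ℂ) * z ^ j.val) + Q = 0 :=
      (mul_eq_zero.mp h5).resolve_left h2pi
    have h7 : (n : ℂ) * ((n : ℂ)⁻¹ * (∑ j : ZMod n, (j.val : ℂ) * z ^ j.val) + Q) = 0 := by
      rw [h6, mul_zero]
    rw [mul_add, ← mul_assoc, mul_inv_cancel₀ hn, one_mul] at h7
    linear_combination h7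
  -- weighted geometric sum
  have hzn : z ^ n = 1 := ee_pow_n _
  have hzsum_range : ∑ k ∈ Finset.range n, z ^ k = 0 := by
    rw [← sum_zmod_val (fun k => z ^ k)]
    exact hzsum
  have hSjv : ∑ j : ZMod n, ((j.val : ℕ) : ℂ) * z ^ j.val
      = ∑ k ∈ Finset.range n, (k : ℂ) * z ^ k :=
    sum_zmod_val (fun k => (k : ℂ) * z ^ k)
  have hG : (z - 1) * ∑ k ∈ Finset.range n, (k : ℂ) * z ^ k = (n : ℂ) := by
    rw [geom_weighted, hzn, hzsum_range]
    ring
  have hfinal : (-(z - 1)) * Q = 1 := by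
    rw [← hSjv, h4] at hG
    have hG' : (n : ℂ) * ((-(z - 1)) * Q) = (n : ℂ) * 1 := by linear_combination hG
    exact mul_left_cancel₀ (ncast_ne_zero (n := n)) hG'
  -- cyclotomic contradiction
  set p : ℕ := n / d with hp
  have hpd : p * d = n := Nat.div_mul_cancel hdvd
  have hppos : 0 < p := hprime.pos
  have hz_pow_p : z ^ p = 1 := by
    rw [hz, ← ee_natmul p (-(d : ZMod n))]
    have : (p : ZMod n) * (-((d : ℕ) : ZMod n)) = -(((p * d : ℕ) : ZMod n)) := by
      push_cast
      ring
    rw [this, hpd, ZMod.natCast_self, neg_zero, ee_zero]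
  have hz_ne_one : z ≠ 1 := ee_ne_one (neg_ne_zero.mpr hdne)
  have horder : orderOf z = p := by
    have h1 : orderOf z ∣ p := orderOf_dvd_of_pow_eq_one hz_pow_p
    rcases hprime.eq_one_or_self_of_dvd _ h1 with h | h
    · exact absurd (orderOf_eq_one_iff.mp h) hz_ne_one
    · exact h
  have hzprim : IsPrimitiveRoot z p := horder ▸ IsPrimitiveRoot.orderOf z
  set P : Polynomial ℤ := ∑ j : ZMod n, Polynomial.C (m j) * Polynomial.X ^ j.val with hP
  have haevalP : Polynomial.aeval z P = Q := by
    rw [hP, map_sum, hQ]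
    apply Finset.sum_congr rfl
    intro j _
    simp
  set R : Polynomial ℤ := (-(Polynomial.X - 1)) * P - 1 with hR
  have haevalR : Polynomial.aeval z R = 0 := by
    rw [hR]
    simp only [map_sub, _root_.map_mul, map_neg, Polynomial.aeval_X, _root_.map_one]
    rw [haevalP]
    linear_combination hfinal
  have hmin : minpoly ℤ z ∣ R :=
    minpoly.isIntegrallyClosed_dvd (hzprim.isIntegral hppos) haevalR
  rw [← Polynomial.cyclotomic_eq_minpoly hzprim hppos] at hmin
  obtain ⟨W, hW⟩ := hmin
  have heval := congrArg (Polynomial.eval 1) hW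
  haveI := Fact.mk hprime
  rw [Polynomial.eval_mul, Polynomial.eval_one_cyclotomic_prime] at heval
  have hRe : R.eval (1 : ℤ) = -1 := by
    rw [hR]
    simp
  rw [hRe] at heval
  have hpd1 : (p : ℤ) ∣ 1 := by
    have : (p : ℤ) ∣ -1 := ⟨Polynomial.eval 1 W, heval⟩
    exact (dvd_neg).mp this
  have hple : (p : ℤ) = 1 := Int.eq_one_of_dvd_one (by positivity) hpd1
  have : p = 1 := by exact_mod_cast hple
  exact absurd this hprime.one_lt.ne'
end

section
/- Let p be a prime and n = p², and let G = Circ(a_0,…,a_{n−1}) be an n×n Hermitian circulant matrix with universal perfect state transfer. Then a_j ≠ 0 for all j = 1,…,n−1. -/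
open Matrix Complex

/- ### Auxiliary material -/

namespace Stmt14Aux

open Finset Polynomial

set_option linter.unusedSectionVars false
set_option maxHeartbeats 1000000

variable {n : ℕ} [NeZero n]

/-- The additive character `x ↦ ζ ^ x.val` on `ZMod n`. -/
noncomputable def psi (ζ : ℂ) (x : ZMod n) : ℂ := ζ ^ x.val

lemma psi_zero (ζ : ℂ) : psi ζ (0 : ZMod n) = 1 := by
  simp [psi]

lemma psi_add {ζ : ℂ} (h1 : ζ ^ n = 1) (x y : ZMod n) :
    psi ζ (x + y) = psi ζ x * psi ζ y := by
  have key : ∀ a : ℕ, ζ ^ a = ζ ^ (a % n) := by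
    intro a
    conv_lhs => rw [← Nat.div_add_mod a n]
    rw [pow_add, pow_mul, h1, one_pow, one_mul]
  rw [psi, psi, psi, ← pow_add, ZMod.val_add, ← key]

lemma psi_nsmul {ζ : ℂ} (h1 : ζ ^ n = 1) (m : ℕ) (y : ZMod n) :
    psi ζ (m • y) = psi ζ y ^ m := by
  induction m with
  | zero => simp [psi_zero]
  | succ m ih => rw [succ_nsmul, psi_add h1, ih, pow_succ]

lemma psi_mul {ζ : ℂ} (h1 : ζ ^ n = 1) (x y : ZMod n) :
    psi ζ (x * y) = psi ζ y ^ x.val := by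
  have hx : x * y = x.val • y := by
    rw [nsmul_eq_mul, ZMod.natCast_val, ZMod.cast_id]
  rw [hx, psi_nsmul h1]

lemma psi_mul_neg {ζ : ℂ} (h1 : ζ ^ n = 1) (x : ZMod n) :
    psi ζ x * psi ζ (-x) = 1 := by
  rw [← psi_add h1, add_neg_cancel, psi_zero]

lemma sum_psi {ζ : ℂ} (hζ : IsPrimitiveRoot ζ n) (c : ZMod n) :
    ∑ k : ZMod n, psi ζ (k * c) = if c = 0 then (n : ℂ) else 0 := by
  have h1 : ζ ^ n = 1 := hζ.pow_eq_one
  by_cases hc : c = 0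
  · simp [hc, psi_zero, ZMod.card, psi]
  · rw [if_neg hc]
    have hne : psi ζ c ≠ 1 := by
      have hv : 0 < c.val := Nat.pos_of_ne_zero fun h => hc ((ZMod.val_eq_zero c).mp h)
      exact hζ.pow_ne_one_of_pos_of_lt hv.ne' (ZMod.val_lt c)
    have key : psi ζ c * ∑ k : ZMod n, psi ζ (k * c) = ∑ k : ZMod n, psi ζ (k * c) := by
      rw [Finset.mul_sum]
      refine Fintype.sum_equiv (Equiv.addLeft (1 : ZMod n)) _ _ fun k => ?_
      show psi ζ c * psi ζ (k * c) = psi ζ ((1 + k) * c)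
      rw [← psi_add h1, add_mul, one_mul]
    have h0 : (psi ζ c - 1) * ∑ k : ZMod n, psi ζ (k * c) = 0 := by
      rw [sub_mul, one_mul, key, sub_self]
    rcases mul_eq_zero.mp h0 with h | h
    · exact absurd (sub_eq_zero.mp h) hne
    · exact h

/-- The DFT matrix. -/
noncomputable def Fmat (ζ : ℂ) : Matrix (ZMod n) (ZMod n) ℂ :=
  of fun j k => psi ζ (j * k)

/-- The inverse DFT matrix. -/
noncomputable def Gmat (ζ : ℂ) : Matrix (ZMod n) (ZMod n) ℂ :=
  of fun j k => (n : ℂ)⁻¹ * psi ζ (-(j * k))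

lemma FG {ζ : ℂ} (hζ : IsPrimitiveRoot ζ n) :
    Fmat ζ * Gmat ζ = (1 : Matrix (ZMod n) (ZMod n) ℂ) := by
  have h1 : ζ ^ n = 1 := hζ.pow_eq_one
  have hn0 : (n : ℂ) ≠ 0 := Nat.cast_ne_zero.mpr (NeZero.ne n)
  ext j k
  rw [Matrix.mul_apply]
  have hterm : ∀ r : ZMod n, Fmat ζ j r * Gmat ζ r k
      = (n : ℂ)⁻¹ * psi ζ (r * (j - k)) := by
    intro r
    show psi ζ (j * r) * ((n : ℂ)⁻¹ * psi ζ (-(r * k))) = _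
    have harg : j * r + -(r * k) = r * (j - k) := by ring
    rw [← mul_assoc, mul_comm (psi ζ (j*r)) _, mul_assoc, ← psi_add h1, harg]
  rw [Finset.sum_congr rfl fun r _ => hterm r, ← Finset.mul_sum, sum_psi hζ]
  by_cases h : j = k
  · rw [if_pos (by rw [h, sub_self]), h, Matrix.one_apply_eq, inv_mul_cancel₀ hn0]
  · rw [if_neg (sub_ne_zero.mpr h), mul_zero, Matrix.one_apply_ne h]

lemma GF {ζ : ℂ} (hζ : IsPrimitiveRoot ζ n) :
    Gmat ζ * Fmat ζ = (1 : Matrix (ZMod n) (ZMod n) ℂ) := by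
  have h1 : ζ ^ n = 1 := hζ.pow_eq_one
  have hn0 : (n : ℂ) ≠ 0 := Nat.cast_ne_zero.mpr (NeZero.ne n)
  ext j k
  rw [Matrix.mul_apply]
  have hterm : ∀ r : ZMod n, Gmat ζ j r * Fmat ζ r k
      = (n : ℂ)⁻¹ * psi ζ (r * (k - j)) := by
    intro r
    show (n : ℂ)⁻¹ * psi ζ (-(j * r)) * psi ζ (r * k) = _
    have harg : -(j * r) + r * k = r * (k - j) := by ring
    rw [mul_assoc, ← psi_add h1, harg]
  rw [Finset.sum_congr rfl fun r _ => hterm r, ← Finset.mul_sum, sum_psi hζ]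
  by_cases h : j = k
  · rw [if_pos (by rw [h, sub_self]), h, Matrix.one_apply_eq, inv_mul_cancel₀ hn0]
  · rw [if_neg (sub_ne_zero.mpr fun hh => h hh.symm), mul_zero, Matrix.one_apply_ne h]

lemma diag_conj {ζ : ℂ} (hζ : IsPrimitiveRoot ζ n) (w : ZMod n → ℂ) :
    Fmat ζ * diagonal w * Gmat ζ
      = of (fun u v => (n : ℂ)⁻¹ * ∑ r : ZMod n, w r * psi ζ (r * (u - v))) := by
  have h1 : ζ ^ n = 1 := hζ.pow_eq_one
  ext u v
  rw [Matrix.mul_apply]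
  have hterm : ∀ r : ZMod n,
      ((Fmat ζ * diagonal w : Matrix (ZMod n) (ZMod n) ℂ)) u r * Gmat ζ r v
      = (n : ℂ)⁻¹ * (w r * psi ζ (r * (u - v))) := by
    intro r
    rw [Matrix.mul_diagonal]
    show psi ζ (u * r) * w r * ((n : ℂ)⁻¹ * psi ζ (-(r * v))) = _
    have harg : u * r + -(r * v) = r * (u - v) := by ring
    have hpp : psi ζ (u * r) * psi ζ (-(r * v)) = psi ζ (r * (u - v)) := by
      rw [← psi_add h1, harg]
    calc psi ζ (u * r) * w r * ((n : ℂ)⁻¹ * psi ζ (-(r * v)))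
        = (n : ℂ)⁻¹ * (w r * (psi ζ (u * r) * psi ζ (-(r * v)))) := by ring
      _ = _ := by rw [hpp]
  rw [Finset.sum_congr rfl fun r _ => hterm r, ← Finset.mul_sum, Matrix.of_apply]

/-- The eigenvalues of the circulant. -/
noncomputable def lam (ζ : ℂ) (a : ZMod n → ℂ) (k : ZMod n) : ℂ :=
  ∑ s : ZMod n, a s * psi ζ (s * k)

lemma inv_sum {ζ : ℂ} (hζ : IsPrimitiveRoot ζ n) (a : ZMod n → ℂ) (c : ZMod n) :
    ∑ r : ZMod n, lam ζ a r * psi ζ (r * c) = (n : ℂ) * a (-c) := by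
  have h1 : ζ ^ n = 1 := hζ.pow_eq_one
  have step : ∀ r : ZMod n, lam ζ a r * psi ζ (r * c)
      = ∑ s : ZMod n, a s * psi ζ (r * (s + c)) := by
    intro r
    rw [lam, Finset.sum_mul]
    refine Finset.sum_congr rfl fun s _ => ?_
    have harg : s * r + r * c = r * (s + c) := by ring
    rw [mul_assoc, ← psi_add h1, harg]
  rw [Finset.sum_congr rfl fun r _ => step r, Finset.sum_comm]
  have step2 : ∀ s : ZMod n, ∑ r : ZMod n, a s * psi ζ (r * (s + c))
      = a s * (if s + c = 0 then (n : ℂ) else 0) := by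
    intro s
    rw [← Finset.mul_sum, sum_psi hζ]
  rw [Finset.sum_congr rfl fun s _ => step2 s]
  rw [Finset.sum_eq_single (-c)]
  · rw [if_pos (by ring), mul_comm]
  · intro s _ hs
    rw [if_neg (fun h => hs (by linear_combination h)), mul_zero]
  · intro h
    exact absurd (Finset.mem_univ _) h

lemma circ_decomp {ζ : ℂ} (hζ : IsPrimitiveRoot ζ n) (a : ZMod n → ℂ) :
    Circ a = Fmat ζ * diagonal (lam ζ a) * Gmat ζ := by
  have hn0 : (n : ℂ) ≠ 0 := Nat.cast_ne_zero.mpr (NeZero.ne n)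
  rw [diag_conj hζ]
  ext u v
  show a (v - u) = (n : ℂ)⁻¹ * ∑ r : ZMod n, lam ζ a r * psi ζ (r * (u - v))
  rw [inv_sum hζ, ← mul_assoc, inv_mul_cancel₀ hn0, one_mul, neg_sub]

lemma qwalk_circ {ζ : ℂ} (hζ : IsPrimitiveRoot ζ n) (a : ZMod n → ℂ) (t : ℝ) (u v : ZMod n) :
    qwalk (Circ a) t v u
      = (n : ℂ)⁻¹ * ∑ r : ZMod n, Complex.exp (-(Complex.I * t) * lam ζ a r)
          * psi ζ (r * (v - u)) := by
  set s : ℂ := -(Complex.I * t) with hs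
  have h1 : qwalk (Circ a) t = NormedSpace.exp
      (Fmat ζ * diagonal (fun k => s * lam ζ a k) * Gmat ζ) := by
    rw [qwalk, circ_decomp hζ a]
    congr 1
    have hfn : (fun k => s * lam ζ a k) = s • lam ζ a := rfl
    rw [hfn, Matrix.diagonal_smul, Matrix.mul_smul, Matrix.smul_mul]
  let U : (Matrix (ZMod n) (ZMod n) ℂ)ˣ := ⟨Fmat ζ, Gmat ζ, FG hζ, GF hζ⟩
  have h2 : NormedSpace.exp (Fmat ζ * diagonal (fun k => s * lam ζ a k) * Gmat ζ)
      = Fmat ζ * NormedSpace.exp (diagonal (fun k => s * lam ζ a k)) * Gmat ζ := by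
    have := Matrix.exp_units_conj U (diagonal (fun k => s * lam ζ a k))
    exact this
  have h3 : NormedSpace.exp (diagonal (fun k => s * lam ζ a k))
      = diagonal (fun k => Complex.exp (s * lam ζ a k)) := by
    rw [Matrix.exp_diagonal]
    refine congrArg diagonal (funext fun k => ?_)
    rw [Complex.exp_eq_exp_ℂ]
    exact Pi.coe_exp _ k
  rw [h1, h2, h3, diag_conj hζ]
  rfl

lemma all_eq_of_abs_sum {ι : Type*} [Fintype ι] (z : ι → ℂ)
    (h1 : ∀ i, ‖z i‖ = 1)
    (h : ‖∑ i, z i‖ = Fintype.card ι) :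
    ∀ i j, z i = z j := by
  intro i j
  have hne : Nonempty ι := ⟨i⟩
  have hcard : 0 < Fintype.card ι := Fintype.card_pos
  set S : ℂ := ∑ k, z k with hS
  set c : ℂ := S / (Fintype.card ι : ℂ) with hc
  have hcard0 : ((Fintype.card ι : ℕ) : ℂ) ≠ 0 := Nat.cast_ne_zero.mpr hcard.ne'
  have habsc : ‖c‖ = 1 := by
    rw [hc, norm_div, h]
    rw [Complex.norm_natCast]
    exact div_self (Nat.cast_ne_zero.mpr hcard.ne')
  have hSc : S = c * (Fintype.card ι : ℂ) := by
    rw [hc, div_mul_cancel₀ _ hcard0]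
  have hsum_re : ∑ k, ((starRingEnd ℂ) c * z k).re = (Fintype.card ι : ℝ) := by
    have hmulsum : ∑ k, (starRingEnd ℂ) c * z k = (starRingEnd ℂ) c * S := by
      rw [← Finset.mul_sum]
    calc ∑ k, ((starRingEnd ℂ) c * z k).re = ((starRingEnd ℂ) c * S).re := by
          rw [← Complex.re_sum]; exact congrArg _ hmulsum
      _ = (Fintype.card ι : ℝ) := by
          rw [hSc, ← mul_assoc, mul_comm ((starRingEnd ℂ) c) c, Complex.mul_conj]
          have hns : Complex.normSq c = 1 := by
            have := Complex.sq_norm c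
            rw [habsc] at this
            simpa using this.symm
          rw [hns]
          simp
  have hle : ∀ k, ((starRingEnd ℂ) c * z k).re ≤ 1 := by
    intro k
    calc ((starRingEnd ℂ) c * z k).re ≤ ‖(starRingEnd ℂ) c * z k‖ :=
          Complex.re_le_norm _
      _ = 1 := by rw [norm_mul, Complex.norm_conj, habsc, h1, one_mul]
  have hall : ∀ k, ((starRingEnd ℂ) c * z k).re = 1 := by
    by_contra hcon
    push_neg at hcon
    obtain ⟨k0, hk0⟩ := hcon
    have hlt : ((starRingEnd ℂ) c * z k0).re < 1 := lt_of_le_of_ne (hle k0) hk0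
    have hstrict : ∑ k, ((starRingEnd ℂ) c * z k).re < ∑ _k : ι, (1 : ℝ) :=
      Finset.sum_lt_sum (fun k _ => hle k) ⟨k0, Finset.mem_univ _, hlt⟩
    rw [hsum_re, Finset.sum_const, Finset.card_univ, nsmul_eq_mul, mul_one] at hstrict
    exact lt_irrefl _ hstrict
  have hzc : ∀ k, z k = c := by
    intro k
    have habs : ‖(starRingEnd ℂ) c * z k‖ = 1 := by
      rw [norm_mul, Complex.norm_conj, habsc, h1, one_mul]
    have hre : ((starRingEnd ℂ) c * z k).re = 1 := hall k
    have hns : Complex.normSq ((starRingEnd ℂ) c * z k) = 1 := by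
      rw [← Complex.sq_norm, habs]; norm_num
    have him : ((starRingEnd ℂ) c * z k).im = 0 := by
      rw [Complex.normSq_apply, hre] at hns
      nlinarith [hns]
    have key : (starRingEnd ℂ) c * z k = 1 :=
      Complex.ext (by rw [hre, Complex.one_re]) (by rw [him, Complex.one_im])
    have hnsq : Complex.normSq c = 1 := by
      have := Complex.sq_norm c
      rw [habsc] at this
      simpa using this.symm
    have h5 : ((Complex.normSq c : ℝ) : ℂ) * z k = c := by
      rw [← Complex.mul_conj, mul_assoc, key, mul_one]
    rw [hnsq] at h5
    simpa using h5
  rw [hzc i, hzc j]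

lemma geom_ident (x : ℂ) (N : ℕ) :
    (x - 1) * ∑ i ∈ Finset.range N, (i : ℂ) * x ^ i
      = ((N : ℂ) - 1) * x ^ N - (∑ i ∈ Finset.range N, x ^ i) + 1 := by
  induction N with
  | zero => simp
  | succ m ih =>
    rw [Finset.sum_range_succ, Finset.sum_range_succ, mul_add, ih]
    push_cast
    ring

end Stmt14Aux

open Stmt14Aux Finset in
set_option maxHeartbeats 1000000 in
/-- If `p` is prime, `n = p²`, and the Hermitian circulant `Circ(a₀,…,a_{n-1})`
has universal perfect state transfer, then `a_j ≠ 0` for all `j ≠ 0`. -/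
theorem stmt_14 {p n : ℕ} [NeZero n] (hp : p.Prime) (hn : n = p ^ 2)
    (a : ZMod n → ℂ)
    (hHerm : (Circ a).IsHermitian) (hU : upst (Circ a)) :
    ∀ j : ZMod n, j ≠ 0 → a j ≠ 0 := by
  intro j hj haj
  have hn0 : n ≠ 0 := NeZero.ne n
  have hnR : (n : ℝ) ≠ 0 := Nat.cast_ne_zero.mpr hn0
  have hnC : (n : ℂ) ≠ 0 := Nat.cast_ne_zero.mpr hn0
  set ζ : ℂ := Complex.exp (2 * Real.pi * Complex.I / n) with hζdef
  have hζ : IsPrimitiveRoot ζ n := Complex.isPrimitiveRoot_exp n hn0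
  have h1 : ζ ^ n = 1 := hζ.pow_eq_one
  -- Hermitian data
  have hconj : ∀ d : ZMod n, (starRingEnd ℂ) (a d) = a (-d) := by
    intro d
    have h := congrFun (congrFun hHerm d) 0
    simp only [Matrix.conjTranspose_apply, Circ, sub_zero, zero_sub] at h
    exact h
  -- |psi| = 1 and conj of psi
  have habsζ : ‖ζ‖ = 1 := by
    have := Complex.norm_eq_one_of_pow_eq_one h1 hn0
    simpa using this
  have habsψ : ∀ x : ZMod n, ‖psi ζ x‖ = 1 := by
    intro x
    rw [psi, norm_pow, habsζ, one_pow]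
  have hψ0 : ∀ x : ZMod n, psi ζ x ≠ 0 := by
    intro x h
    have := habsψ x
    rw [h] at this
    simp at this
  have hconjψ : ∀ x : ZMod n, (starRingEnd ℂ) (psi ζ x) = psi ζ (-x) := by
    intro x
    have h2 : psi ζ x * psi ζ (-x) = 1 := psi_mul_neg h1 x
    have h3 : psi ζ x * (starRingEnd ℂ) (psi ζ x) = 1 := by
      rw [Complex.mul_conj]
      rw [← Complex.sq_norm, habsψ]
      norm_num
    exact mul_left_cancel₀ (hψ0 x) (h3.trans h2.symm)
  -- eigenvalues are real
  have hlamreal : ∀ k : ZMod n, lam ζ a k = ((lam ζ a k).re : ℂ) := by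
    intro k
    have hc : (starRingEnd ℂ) (lam ζ a k) = lam ζ a k := by
      rw [lam, map_sum]
      refine Fintype.sum_equiv (Equiv.neg (ZMod n)) _ _ fun s => ?_
      simp only [Equiv.neg_apply]
      rw [_root_.map_mul, hconj, hconjψ, neg_mul]
    exact (Complex.conj_eq_iff_re.mp hc).symm
  set r : ZMod n → ℝ := fun k => (lam ζ a k).re with hr
  -- PST from 0 to 1
  obtain ⟨t, ht, hpst⟩ := hU 0 1
  rw [pst, qwalk_circ hζ a t 0 1] at hpst
  set z : ZMod n → ℂ := fun k => Complex.exp (-(Complex.I * t) * lam ζ a k) * psi ζ (k * (1 - 0))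
    with hz
  have habsz : ∀ k, ‖z k‖ = 1 := by
    intro k
    rw [hz]
    simp only
    rw [norm_mul, habsψ, mul_one, Complex.norm_exp]
    have hre0 : (-(Complex.I * t) * lam ζ a k).re = 0 := by
      rw [hlamreal k]
      simp
    rw [hre0, Real.exp_zero]
  have habsS : ‖∑ k : ZMod n, z k‖ = Fintype.card (ZMod n) := by
    rw [ZMod.card]
    have h4 : ‖(n : ℂ)⁻¹‖ * ‖∑ k : ZMod n, z k‖ = 1 := by
      rw [← norm_mul]
      exact hpst
    have h5 : ‖(n : ℂ)⁻¹‖ = (n : ℝ)⁻¹ := by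
      rw [norm_inv, Complex.norm_natCast]
    rw [h5] at h4
    field_simp at h4
    linarith [h4]
  have hzeq := all_eq_of_abs_sum z habsz habsS
  -- turn into exponent equation
  have hexp : ∀ k : ZMod n, ∃ m : ℤ,
      -(t * r k) + 2 * Real.pi * k.val / n = -(t * r 0) + m * (2 * Real.pi) := by
    intro k
    have hk := hzeq k 0
    have hψk : psi ζ (k * (1 - 0))
        = Complex.exp (Complex.I * ((2 * Real.pi * k.val / n : ℝ) : ℂ)) := by
      rw [sub_zero, mul_one, psi, hζdef, ← Complex.exp_nat_mul]
      congr 1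
      push_cast
      ring
    have hψ0' : psi ζ ((0 : ZMod n) * (1 - 0)) = 1 := by
      rw [zero_mul, psi_zero]
    have hek : ∀ k' : ZMod n, Complex.exp (-(Complex.I * t) * lam ζ a k')
        = Complex.exp (Complex.I * ((-(t * r k') : ℝ) : ℂ)) := by
      intro k'
      congr 1
      rw [hlamreal k']
      push_cast
      ring
    rw [hz] at hk
    simp only at hk
    rw [hψk, hψ0', mul_one, hek k, hek 0, ← Complex.exp_add] at hk
    have hk2 := Complex.exp_eq_exp_iff_exists_int.mp hk
    obtain ⟨m, hm⟩ := hk2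
    refine ⟨m, ?_⟩
    have him := congrArg Complex.im hm
    simp only [Complex.add_im, Complex.mul_im, Complex.I_re, Complex.I_im, Complex.ofReal_re,
      Complex.ofReal_im, Complex.intCast_im, Complex.intCast_re, Complex.re_ofNat,
      Complex.im_ofNat, Complex.mul_re] at him
    convert him using 1 <;> push_cast <;> ring
  choose m hm using hexp
  have ht0 : t ≠ 0 := ne_of_gt ht
  have hlamdiff : ∀ k : ZMod n, (t : ℂ) * (n : ℂ) * (lam ζ a k - lam ζ a 0)
      = 2 * (Real.pi : ℂ) * ((k.val : ℂ) - (n : ℂ) * ((m k : ℤ) : ℂ)) := by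
    intro k
    have h2 : t * (r k - r 0) = 2 * Real.pi * k.val / n - 2 * Real.pi * m k := by
      linear_combination -1 * hm k
    have h3 : t * n * (r k - r 0) = 2 * Real.pi * ((k.val : ℝ) - n * m k) := by
      have h4 : t * n * (r k - r 0) = n * (t * (r k - r 0)) := by ring
      rw [h4, h2]
      field_simp
    have h5 := congrArg (Complex.ofReal) h3
    rw [hlamreal k, hlamreal 0]
    push_cast at h5 ⊢
    linear_combination h5
  -- key sum vanishing
  have hsum0 : ∑ k : ZMod n, lam ζ a k * psi ζ (k * (-j)) = 0 := by
    rw [inv_sum hζ a (-j), neg_neg, haj, mul_zero]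
  have hsumconst : ∑ k : ZMod n, psi ζ (k * (-j)) = 0 := by
    rw [sum_psi hζ, if_neg (neg_ne_zero.mpr hj)]
  have hdiff : ∑ k : ZMod n, (lam ζ a k - lam ζ a 0) * psi ζ (k * (-j)) = 0 := by
    have hsplit : ∑ k : ZMod n, (lam ζ a k - lam ζ a 0) * psi ζ (k * (-j))
        = (∑ k : ZMod n, lam ζ a k * psi ζ (k * (-j)))
          - lam ζ a 0 * ∑ k : ZMod n, psi ζ (k * (-j)) := by
      rw [Finset.mul_sum, ← Finset.sum_sub_distrib]
      exact Finset.sum_congr rfl fun k _ => by ring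
    rw [hsplit, hsum0, hsumconst, mul_zero, sub_zero]
  have hdiff2 : ∑ k : ZMod n,
      ((k.val : ℂ) - (n : ℂ) * ((m k : ℤ) : ℂ)) * psi ζ (k * (-j)) = 0 := by
    have h6 : (2 * (Real.pi : ℂ)) * ∑ k : ZMod n,
        ((k.val : ℂ) - (n : ℂ) * ((m k : ℤ) : ℂ)) * psi ζ (k * (-j)) = 0 := by
      rw [Finset.mul_sum]
      have h7 : ∀ k : ZMod n,
          (2 * (Real.pi : ℂ)) * (((k.val : ℂ) - (n : ℂ) * ((m k : ℤ) : ℂ)) * psi ζ (k * (-j)))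
          = ((t : ℂ) * (n : ℂ)) * ((lam ζ a k - lam ζ a 0) * psi ζ (k * (-j))) := by
        intro k
        rw [← mul_assoc, ← hlamdiff k]
        ring
      rw [Finset.sum_congr rfl fun k _ => h7 k, ← Finset.mul_sum, hdiff, mul_zero]
    have hpi : (2 * (Real.pi : ℂ)) ≠ 0 := by
      simp [Complex.ofReal_ne_zero, Real.pi_ne_zero]
    exact (mul_eq_zero.mp h6).resolve_left hpi
  -- the root ξ
  set ξ : ℂ := psi ζ (-j) with hξdef
  have hξn : ξ ^ n = 1 := by
    rw [hξdef, psi, ← pow_mul, mul_comm, pow_mul, h1, one_pow]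
  have hξne : ξ ≠ 1 := by
    have hv : 0 < (-j).val :=
      Nat.pos_of_ne_zero fun h => (neg_ne_zero.mpr hj) ((ZMod.val_eq_zero _).mp h)
    exact hζ.pow_ne_one_of_pos_of_lt hv.ne' (ZMod.val_lt _)
  have hψξ : ∀ k : ZMod n, psi ζ (k * (-j)) = ξ ^ k.val := fun k => psi_mul h1 k (-j)
  -- convert to a range sum
  set M : ℕ → ℤ := fun i => m ((i : ℕ) : ZMod n) with hM
  have hrange : ∑ i ∈ Finset.range n, (((i : ℕ) : ℂ) - (n : ℂ) * ((M i : ℤ) : ℂ)) * ξ ^ i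
      = ∑ k : ZMod n, ((k.val : ℂ) - (n : ℂ) * ((m k : ℤ) : ℂ)) * psi ζ (k * (-j)) := by
    refine Finset.sum_nbij' (fun i => ((i : ℕ) : ZMod n)) (fun k => k.val) ?_ ?_ ?_ ?_ ?_
    · intro i _; exact Finset.mem_univ _
    · intro k _; exact Finset.mem_range.mpr (ZMod.val_lt k)
    · intro i hi; exact ZMod.val_cast_of_lt (Finset.mem_range.mp hi)
    · intro k _; exact ZMod.natCast_rightInverse k
    · intro i hi
      rw [hψξ, ZMod.val_cast_of_lt (Finset.mem_range.mp hi)]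
  have hrange0 : ∑ i ∈ Finset.range n, (((i : ℕ) : ℂ) - (n : ℂ) * ((M i : ℤ) : ℂ)) * ξ ^ i = 0 :=
    hrange.trans hdiff2
  have hsplit2 : ∑ i ∈ Finset.range n, ((i : ℕ) : ℂ) * ξ ^ i
      = (n : ℂ) * ∑ i ∈ Finset.range n, ((M i : ℤ) : ℂ) * ξ ^ i := by
    have h8 : ∑ i ∈ Finset.range n, (((i : ℕ) : ℂ) - (n : ℂ) * ((M i : ℤ) : ℂ)) * ξ ^ i
        = (∑ i ∈ Finset.range n, ((i : ℕ) : ℂ) * ξ ^ i)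
          - (n : ℂ) * ∑ i ∈ Finset.range n, ((M i : ℤ) : ℂ) * ξ ^ i := by
      rw [Finset.mul_sum, ← Finset.sum_sub_distrib]
      exact Finset.sum_congr rfl fun i _ => by ring
    have h9 := hrange0
    rw [h8] at h9
    linear_combination h9
  have hgeo : ∑ i ∈ Finset.range n, ξ ^ i = 0 := by
    rw [geom_sum_eq hξne, hξn, sub_self, zero_div]
  have hkey : (ξ - 1) * ((n : ℂ) * ∑ i ∈ Finset.range n, ((M i : ℤ) : ℂ) * ξ ^ i) = (n : ℂ) := by
    rw [← hsplit2, geom_ident ξ n, hξn, hgeo]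
    ring
  have hunit : (ξ - 1) * (∑ i ∈ Finset.range n, ((M i : ℤ) : ℂ) * ξ ^ i) = 1 := by
    have h10 : (n : ℂ) * ((ξ - 1) * ∑ i ∈ Finset.range n, ((M i : ℤ) : ℂ) * ξ ^ i)
        = (n : ℂ) * 1 := by
      rw [mul_one]
      linear_combination hkey
    exact mul_left_cancel₀ hnC h10
  -- polynomial endgame
  set B : Polynomial ℤ := ∑ i ∈ Finset.range n, Polynomial.C (M i) * Polynomial.X ^ i with hB
  have haevalB : Polynomial.aeval ξ B = ∑ i ∈ Finset.range n, ((M i : ℤ) : ℂ) * ξ ^ i := by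
    rw [hB, map_sum]
    exact Finset.sum_congr rfl fun i _ => by
      rw [_root_.map_mul, Polynomial.aeval_C, map_pow, Polynomial.aeval_X]
      rfl
  set Q : Polynomial ℤ := (Polynomial.X - 1) * B - 1 with hQ
  have haevalQ : Polynomial.aeval ξ Q = 0 := by
    rw [hQ, map_sub, _root_.map_mul, map_sub, _root_.map_one, Polynomial.aeval_X,
      haevalB, hunit, sub_self]
  have hfin : IsOfFinOrder ξ := isOfFinOrder_iff_pow_eq_one.mpr ⟨n, Nat.pos_of_ne_zero hn0, hξn⟩
  have hopos : 0 < orderOf ξ := hfin.orderOf_pos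
  have hdvdn : orderOf ξ ∣ n := orderOf_dvd_of_pow_eq_one hξn
  have hne1' : orderOf ξ ≠ 1 := fun h => hξne (orderOf_eq_one_iff.mp h)
  rw [hn] at hdvdn
  obtain ⟨kk, hkk2, hkkeq⟩ := (Nat.dvd_prime_pow hp).mp hdvdn
  have hkkpos : kk ≠ 0 := by
    rintro rfl
    rw [pow_zero] at hkkeq
    exact hne1' hkkeq
  obtain ⟨k', rfl⟩ := Nat.exists_eq_succ_of_ne_zero hkkpos
  have hprim : IsPrimitiveRoot ξ (orderOf ξ) := IsPrimitiveRoot.orderOf ξ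
  have hmin : Polynomial.cyclotomic (orderOf ξ) ℤ = minpoly ℤ ξ :=
    Polynomial.cyclotomic_eq_minpoly hprim hopos
  have hint : IsIntegral ℤ ξ := hprim.isIntegral hopos
  have hdvdQ : minpoly ℤ ξ ∣ Q := minpoly.isIntegrallyClosed_dvd hint haevalQ
  rw [← hmin, hkkeq] at hdvdQ
  obtain ⟨R, hR⟩ := hdvdQ
  have heval := congrArg (Polynomial.eval (1 : ℤ)) hR
  haveI : Fact p.Prime := ⟨hp⟩
  rw [Polynomial.eval_mul, Polynomial.eval_one_cyclotomic_prime_pow] at heval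
  have hQ1 : Polynomial.eval (1 : ℤ) Q = -1 := by
    rw [hQ]
    simp
  rw [hQ1] at heval
  have hdvd1 : (p : ℤ) ∣ 1 := by
    have hdvdneg : (p : ℤ) ∣ -1 := ⟨Polynomial.eval 1 R, heval⟩
    exact dvd_neg.mp hdvdneg
  have hple : (p : ℤ) ≤ 1 := Int.le_of_dvd one_pos hdvd1
  have hp2 : (2 : ℤ) ≤ (p : ℤ) := by exact_mod_cast hp.two_le
  omega
end
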